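/- arXiv:1009.0272 — 11 statements merged into one kernel-verified Lean document; each statement's English description precedes it below -/
import Mathlib

section
/- Let n ≥ 2, fix i ∈ {1,...,n-1}, and let v ∈ ℕ^{n-1} (extended by v_0 = v_n = 0) satisfy: (1) for all j < i, v_{j+1} - v_j ∈ {0,1}, and (2) for all j > i, v_{j-1} - v_j ∈ {0,1}. Assume v is not identically zero. Then there exists a subset A ⊆ {1,...,n} with |A| = i and A ≠ {1,...,i} such that Σ_{j=1}^{n-1} v_j·(e_j - e_{j+1}) = 1_{{1,...,i}} - 1_A in ℤ^n. -/
open Finset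

/-- Indicator vector of a finite subset of `{1,…,n}`, as an integer-valued function. -/
def ind (S : Finset ℕ) (m : ℕ) : ℤ := if m ∈ S then 1 else 0

/-- Simple root `α_j = e_j - e_{j+1}` of `sl_n`, as a function on coordinates. -/
def alphaRoot (j m : ℕ) : ℤ := if m = j then 1 else if m = j + 1 then -1 else 0

lemma ind_sum (s T : Finset ℕ) (hT : T ⊆ s) : ∑ m ∈ s, ind T m = (T.card : ℤ) := by
  classical
  unfold ind
  rw [Finset.sum_ite_mem, Finset.inter_eq_right.mpr hT]
  simp

lemma telescope (v : ℕ → ℕ) (N : ℕ) :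
    ∑ m ∈ Finset.Icc 1 N, ((v m : ℤ) - v (m - 1)) = (v N : ℤ) - v 0 := by
  induction N with
  | zero => simp
  | succ N ih =>
      rw [Finset.sum_Icc_succ_top (by omega), ih]
      simp

/-- if `v ∈ ℕ^{n-1}` (extended by `v 0 = v n = 0`) satisfies the
dimension-vector conditions for socle `S_i` and is not identically zero, then
`Σ_j v_j α_j = 1_{{1,…,i}} - 1_A` for some size-`i` subset `A ⊆ {1,…,n}` with
`A ≠ {1,…,i}`. -/
theorem dimension_vector_gives_subset (n i : ℕ) (hn : 2 ≤ n) (hi1 : 1 ≤ i)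
    (hi2 : i ≤ n - 1) (v : ℕ → ℕ)
    (hv0 : v 0 = 0) (hvtop : ∀ j, n ≤ j → v j = 0)
    (h1 : ∀ j, j < i → v (j + 1) = v j ∨ v (j + 1) = v j + 1)
    (h2 : ∀ j, i < j → v (j - 1) = v j ∨ v (j - 1) = v j + 1)
    (hnz : ∃ j, v j ≠ 0) :
    ∃ A : Finset ℕ, A ⊆ Finset.Icc 1 n ∧ A.card = i ∧ A ≠ Finset.Icc 1 i ∧
      ∀ m, 1 ≤ m → m ≤ n →
        (∑ j ∈ Finset.Icc 1 (n - 1), (v j : ℤ) * alphaRoot j m)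
          = ind (Finset.Icc 1 i) m - ind A m := by
  classical
  set A : Finset ℕ := (Finset.Icc 1 n).filter
    (fun m => (m ≤ i ∧ v m = v (m - 1)) ∨ (i < m ∧ v (m - 1) = v m + 1)) with hA
  have hAsub : A ⊆ Finset.Icc 1 n := Finset.filter_subset _ _
  have hmemA : ∀ m, m ∈ A ↔ (1 ≤ m ∧ m ≤ n) ∧
      ((m ≤ i ∧ v m = v (m - 1)) ∨ (i < m ∧ v (m - 1) = v m + 1)) := by
    intro m
    simp [hA, Finset.mem_filter, Finset.mem_Icc]
  -- the sum of roots computes the discrete derivative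
  have hsum : ∀ m, 1 ≤ m → m ≤ n →
      (∑ j ∈ Finset.Icc 1 (n - 1), (v j : ℤ) * alphaRoot j m)
        = (v m : ℤ) - v (m - 1) := by
    intro m hm1 hmn
    have hstep : ∀ j ∈ Finset.Icc 1 (n - 1), (v j : ℤ) * alphaRoot j m
        = (if m = j then (v j : ℤ) else 0) + (if m - 1 = j then -(v j : ℤ) else 0) := by
      intro j hj
      simp only [Finset.mem_Icc] at hj
      unfold alphaRoot
      have h1' : (m = j + 1) ↔ (m - 1 = j) := by omega
      split_ifs with ha hb hb hc <;> try ring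
      · omega
      · omega
      · omega
    rw [Finset.sum_congr rfl hstep, Finset.sum_add_distrib,
        Finset.sum_ite_eq (Finset.Icc 1 (n - 1)) m (fun j => (v j : ℤ)),
        Finset.sum_ite_eq (Finset.Icc 1 (n - 1)) (m - 1) (fun j => -(v j : ℤ))]
    by_cases hm : m ≤ n - 1
    · rw [if_pos (Finset.mem_Icc.mpr ⟨hm1, hm⟩)]
      by_cases hm2 : 2 ≤ m
      · rw [if_pos (Finset.mem_Icc.mpr ⟨by omega, by omega⟩)]; ring
      · have : m = 1 := by omega
        subst this
        rw [if_neg (by simp)]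
        simp [hv0]
    · have hmn' : m = n := by omega
      have : v m = 0 := hvtop m (by omega)
      rw [if_neg (by simp [Finset.mem_Icc]; omega), this]
      rw [if_pos (Finset.mem_Icc.mpr ⟨by omega, by omega⟩)]
      push_cast
      ring
  -- the pointwise identity
  have hpt : ∀ m, 1 ≤ m → m ≤ n →
      (∑ j ∈ Finset.Icc 1 (n - 1), (v j : ℤ) * alphaRoot j m)
        = ind (Finset.Icc 1 i) m - ind A m := by
    intro m hm1 hmn
    rw [hsum m hm1 hmn]
    unfold ind
    by_cases hmi : m ≤ i
    · rw [if_pos (Finset.mem_Icc.mpr ⟨hm1, hmi⟩)]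
      have := h1 (m - 1) (by omega)
      have hm' : m - 1 + 1 = m := by omega
      rw [hm'] at this
      rcases this with h | h
      · rw [if_pos ((hmemA m).mpr ⟨⟨hm1, hmn⟩, Or.inl ⟨hmi, h⟩⟩)]
        rw [h]; ring
      · rw [if_neg (by
          rw [hmemA m]
          rintro ⟨-, (⟨-, he⟩ | ⟨hlt, -⟩)⟩ <;> omega)]
        rw [h]; push_cast; ring
    · rw [if_neg (by simp [Finset.mem_Icc]; omega)]
      rcases h2 m (by omega) with h | h
      · rw [if_neg (by
          rw [hmemA m]
          rintro ⟨-, (⟨hle, -⟩ | ⟨-, he⟩)⟩ <;> omega)]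
        rw [h]; ring
      · rw [if_pos ((hmemA m).mpr ⟨⟨hm1, hmn⟩, Or.inr ⟨by omega, h⟩⟩)]
        rw [h]; push_cast; ring
  -- cardinality
  have hIsub : Finset.Icc 1 i ⊆ Finset.Icc 1 n := by
    apply Finset.Icc_subset_Icc_right; omega
  have hcard : A.card = i := by
    have hs : ∑ m ∈ Finset.Icc 1 n, ((v m : ℤ) - v (m - 1))
        = ∑ m ∈ Finset.Icc 1 n, (ind (Finset.Icc 1 i) m - ind A m) := by
      apply Finset.sum_congr rfl
      intro m hm
      simp only [Finset.mem_Icc] at hm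
      rw [← hsum m hm.1 hm.2, hpt m hm.1 hm.2]
    rw [telescope, Finset.sum_sub_distrib, ind_sum _ _ hIsub, ind_sum _ _ hAsub,
        hvtop n le_rfl, hv0] at hs
    have : (Finset.Icc 1 i).card = i := by rw [Nat.card_Icc]; omega
    rw [this] at hs
    omega
  -- A is not Icc 1 i
  have hne : A ≠ Finset.Icc 1 i := by
    intro hAeq
    have hup : ∀ m, m ≤ i → v m = 0 := by
      intro m
      induction m with
      | zero => intro _; exact hv0
      | succ m ih =>
          intro hm
          have hmem : m + 1 ∈ A := by
            rw [hAeq, Finset.mem_Icc]; omega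
          rw [hmemA] at hmem
          rcases hmem with ⟨-, (⟨-, he⟩ | ⟨hlt, -⟩)⟩
          · simpa [he] using ih (by omega)
          · omega
    have hdown : ∀ d m, m + d = n → i ≤ m → v m = 0 := by
      intro d
      induction d with
      | zero => intro m hm _; exact hvtop m (by omega)
      | succ d ih =>
          intro m hm hmi
          have hnot : m + 1 ∉ A := by
            rw [hAeq, Finset.mem_Icc]; omega
          rw [hmemA] at hnot
          have h2' := h2 (m + 1) (by omega)
          have hm' : m + 1 - 1 = m := by omega
          rw [hm'] at h2' hnot
          have hnext : v (m + 1) = 0 := ih (m + 1) (by omega) (by omega)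
          rcases h2' with h | h
          · rw [h, hnext]
          · exact absurd ⟨⟨by omega, by omega⟩, Or.inr ⟨by omega, h⟩⟩ hnot
    obtain ⟨j, hj⟩ := hnz
    by_cases hji : j ≤ i
    · exact hj (hup j hji)
    · by_cases hjn : j ≤ n
      · exact hj (hdown (n - j) j (by omega) (by omega))
      · exact hj (hvtop j (by omega))
  exact ⟨A, hAsub, hcard, hne, hpt⟩
end

section
/- Let A = {a_1 < ... < a_i} and B = {b_1 < ... < b_j} be subsets of {1,...,n} with i ≤ j. Define R = {r ∈ {1,...,i} : r ≤ j < a_r and a_{r-l} ≤ b_{j-l} for all l = 0,...,r-1}. Then |R| = r* - s, where r* is the largest r ∈ {0,1,...,min(i,j)} such that a_{r-l} ≤ b_{j-l} for all l = 0,...,r-1 (with r* = 0 if no such positive r exists), and s = |{1,...,j} ∩ A|. -/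
open Finset

/-- with `A = {a 1 < … < a i}`, `B = {b 1 < … < b j}`, `i ≤ j`,
`R = {r ∈ [1,i] : r ≤ j < a r and a (r-l) ≤ b (j-l) for all l < r}`,
`r*` the largest `r ≤ i` with `a (r-l) ≤ b (j-l)` for all `l < r`, and
`s = |{1,…,j} ∩ A|`, we have `|R| = r* - s`. -/
theorem card_R_eq (n i j : ℕ) (hij : i ≤ j) (hjn : j ≤ n)
    (a b : ℕ → ℕ)
    (hamono : ∀ r s, 1 ≤ r → r < s → s ≤ i → a r < a s)
    (halb : ∀ r, 1 ≤ r → r ≤ i → 1 ≤ a r)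
    (haub : ∀ r, 1 ≤ r → r ≤ i → a r ≤ n)
    (hbmono : ∀ r s, 1 ≤ r → r < s → s ≤ j → b r < b s)
    (hblb : ∀ r, 1 ≤ r → r ≤ j → 1 ≤ b r)
    (hbub : ∀ r, 1 ≤ r → r ≤ j → b r ≤ n)
    (rstar : ℕ) (hr1 : rstar ≤ i)
    (hr2 : ∀ l, l < rstar → a (rstar - l) ≤ b (j - l))
    (hr3 : ∀ r, r ≤ i → (∀ l, l < r → a (r - l) ≤ b (j - l)) → r ≤ rstar) :
    ((Finset.Icc 1 i).filter
        (fun r => r ≤ j ∧ j < a r ∧ ∀ l, l < r → a (r - l) ≤ b (j - l))).card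
      = rstar - (((Finset.Icc 1 i).image a) ∩ Finset.Icc 1 j).card := by
  -- gap lemma: strict monotonicity of `a` gives `a (r - l) + l ≤ a r`
  have gap : ∀ l r, 1 ≤ r - l → r ≤ i → a (r - l) + l ≤ a r := by
    intro l
    induction l with
    | zero => intro r h1 h2; simp
    | succ l ih =>
      intro r h1 h2
      have hlt : a (r - (l + 1)) < a (r - l) := hamono _ _ h1 (by omega) (by omega)
      have := ih r (by omega) h2
      omega
  -- lower bound for `b` : `m ≤ b m`
  have bge : ∀ m, m ≤ j → m ≤ b m := by
    intro m
    induction m with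
    | zero => intro; omega
    | succ m ih =>
      intro hm
      rcases Nat.eq_zero_or_pos m with h | h
      · subst h; simpa using hblb 1 le_rfl hm
      · have h1 : b m < b (m + 1) := hbmono m (m + 1) h (by omega) hm
        have := ih (by omega)
        omega
  -- if `a r ≤ j` then `r ≤ rstar`
  have key : ∀ r, 1 ≤ r → r ≤ i → a r ≤ j → r ≤ rstar := by
    intro r h1 h2 h3
    apply hr3 r h2
    intro l hl
    have hg := gap l r (by omega) h2
    have hb := bge (j - l) (by omega)
    omega
  -- condition P is downward closed
  have Pdown : ∀ r, r ≤ rstar → ∀ l, l < r → a (r - l) ≤ b (j - l) := by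
    intro r hr l hl
    have h2 := hr2 l (by omega)
    rcases eq_or_lt_of_le hr with heq | hlt
    · subst heq; exact h2
    · have : a (r - l) < a (rstar - l) := hamono _ _ (by omega) (by omega) (by omega)
      omega
  have hset1 : (Finset.Icc 1 i).filter
        (fun r => r ≤ j ∧ j < a r ∧ ∀ l, l < r → a (r - l) ≤ b (j - l))
      = (Finset.Icc 1 rstar).filter (fun r => j < a r) := by
    ext r
    simp only [mem_filter, mem_Icc]
    constructor
    · rintro ⟨⟨h1, h2⟩, _, h4, h5⟩
      exact ⟨⟨h1, hr3 r h2 h5⟩, h4⟩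
    · rintro ⟨⟨h1, h2⟩, h4⟩
      exact ⟨⟨h1, le_trans h2 hr1⟩, by omega, h4, Pdown r h2⟩
  have hset2 : ((Finset.Icc 1 i).image a) ∩ Finset.Icc 1 j
      = ((Finset.Icc 1 rstar).filter (fun r => a r ≤ j)).image a := by
    ext x
    simp only [mem_inter, mem_image, mem_filter, mem_Icc]
    constructor
    · rintro ⟨⟨r, ⟨h1, h2⟩, rfl⟩, h3, h4⟩
      exact ⟨r, ⟨⟨h1, key r h1 h2 h4⟩, h4⟩, rfl⟩
    · rintro ⟨r, ⟨⟨h1, h2⟩, h3⟩, rfl⟩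
      exact ⟨⟨r, ⟨h1, le_trans h2 hr1⟩, rfl⟩, halb r h1 (le_trans h2 hr1), h3⟩
  have hinj : Set.InjOn a ((Finset.Icc 1 rstar).filter (fun r => a r ≤ j)) := by
    intro x hx y hy hxy
    simp only [coe_filter, Set.mem_setOf_eq, mem_Icc] at hx hy
    by_contra hne
    rcases Nat.lt_or_ge x y with h | h
    · have := hamono x y hx.1.1 h (le_trans hy.1.2 hr1); omega
    · have := hamono y x hy.1.1 (by omega) (le_trans hx.1.2 hr1); omega
  rw [hset1, hset2, Finset.card_image_of_injOn hinj]
  have hsplit := Finset.card_filter_add_card_filter_not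
    (s := Finset.Icc 1 rstar) (p := fun r => a r ≤ j)
  have hc : (Finset.Icc 1 rstar).card = rstar := by simp
  have heq : (Finset.Icc 1 rstar).filter (fun r => j < a r)
      = (Finset.Icc 1 rstar).filter (fun r => ¬ a r ≤ j) := by
    apply filter_congr; intro x _; simp [not_le]
  rw [heq]
  omega
end

section
/- Let A = {a_1 < ... < a_i} and B = {b_1 < ... < b_j} be subsets of {1,...,n} with i ≤ j. Let r* be the largest r ∈ {0,...,i} such that a_{r-l} ≤ b_{j-l} for all l = 0,...,r-1. Then r* = max over all size-j subsets C of {1,...,n} with C ≤ B of |C ∩ A|, where C ≤ B means 1_C - 1_B is a nonnegative integer combination of the simple roots α_1,...,α_{n-1} (equivalently, c_k ≤ b_k for all k = 1,...,j when C = {c_1 < ... < c_j}). -/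
open Finset

/-- `r*`, the largest `r ∈ {0,…,i}` with `a (r-l) ≤ b (j-l)` for all
`l < r`, equals the maximum of `|C ∩ A|` over all size-`j` subsets `C ≤ B` of
`{1,…,n}` (dominance order: `c k ≤ b k` for all `k`).  Subsets are encoded by
their strictly increasing enumerations. -/
theorem rstar_eq_max (n i j : ℕ) (hij : i ≤ j) (hjn : j ≤ n)
    (a b : ℕ → ℕ)
    (hamono : ∀ r s, 1 ≤ r → r < s → s ≤ i → a r < a s)
    (halb : ∀ r, 1 ≤ r → r ≤ i → 1 ≤ a r)
    (haub : ∀ r, 1 ≤ r → r ≤ i → a r ≤ n)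
    (hbmono : ∀ r s, 1 ≤ r → r < s → s ≤ j → b r < b s)
    (hblb : ∀ r, 1 ≤ r → r ≤ j → 1 ≤ b r)
    (hbub : ∀ r, 1 ≤ r → r ≤ j → b r ≤ n)
    (rstar : ℕ) (hr1 : rstar ≤ i)
    (hr2 : ∀ l, l < rstar → a (rstar - l) ≤ b (j - l))
    (hr3 : ∀ r, r ≤ i → (∀ l, l < r → a (r - l) ≤ b (j - l)) → r ≤ rstar) :
    (∃ c : ℕ → ℕ,
        (∀ r s, 1 ≤ r → r < s → s ≤ j → c r < c s) ∧
        (∀ k, 1 ≤ k → k ≤ j → 1 ≤ c k ∧ c k ≤ n) ∧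
        (∀ k, 1 ≤ k → k ≤ j → c k ≤ b k) ∧
        ((((Finset.Icc 1 j).image c) ∩ ((Finset.Icc 1 i).image a)).card = rstar)) ∧
    (∀ c : ℕ → ℕ,
        (∀ r s, 1 ≤ r → r < s → s ≤ j → c r < c s) →
        (∀ k, 1 ≤ k → k ≤ j → 1 ≤ c k ∧ c k ≤ n) →
        (∀ k, 1 ≤ k → k ≤ j → c k ≤ b k) →
        (((Finset.Icc 1 j).image c) ∩ ((Finset.Icc 1 i).image a)).card ≤ rstar) := by
  -- non-strict monotonicity helpers
  have amono : ∀ p q, 1 ≤ p → p ≤ q → q ≤ i → a p ≤ a q := by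
    intro p q h1 h2 h3
    rcases eq_or_lt_of_le h2 with h | h
    · subst h; exact le_rfl
    · exact (hamono p q h1 h h3).le
  have bmono : ∀ p q, 1 ≤ p → p ≤ q → q ≤ j → b p ≤ b q := by
    intro p q h1 h2 h3
    rcases eq_or_lt_of_le h2 with h | h
    · subst h; exact le_rfl
    · exact (hbmono p q h1 h h3).le
  have hbk : ∀ k, 1 ≤ k → k ≤ j → k ≤ b k := by
    intro k
    induction k with
    | zero => omega
    | succ m ih =>
      intro _ hk
      rcases Nat.eq_zero_or_pos m with hm | hm
      · subst hm; simpa using hblb 1 le_rfl hk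
      · have h1 := ih hm (by omega)
        have h2 := hbmono m (m + 1) hm (by omega) hk
        omega
  -- the upper-bound part
  have key : ∀ c : ℕ → ℕ,
      (∀ r s, 1 ≤ r → r < s → s ≤ j → c r < c s) →
      (∀ k, 1 ≤ k → k ≤ j → 1 ≤ c k ∧ c k ≤ n) →
      (∀ k, 1 ≤ k → k ≤ j → c k ≤ b k) →
      (((Finset.Icc 1 j).image c) ∩ ((Finset.Icc 1 i).image a)).card ≤ rstar := by
    intro c hcmono hcbd hcb
    set S := ((Finset.Icc 1 j).image c) ∩ ((Finset.Icc 1 i).image a) with hSdef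
    set r := S.card with hrdef
    have hSa : S ⊆ (Finset.Icc 1 i).image a := inter_subset_right
    have hSc : S ⊆ (Finset.Icc 1 j).image c := inter_subset_left
    have hri : r ≤ i := by
      calc r ≤ ((Finset.Icc 1 i).image a).card := card_le_card hSa
        _ ≤ (Finset.Icc 1 i).card := card_image_le
        _ = i := by simp [Nat.card_Icc]
    refine hr3 r hri ?_
    intro l hl
    by_contra hlt
    push_neg at hlt
    set β := b (j - l) with hβ
    -- split S by threshold β
    have hsplit := Finset.card_filter_add_card_filter_not
      (s := S) (p := fun x => x ≤ β)
    have hlow : S.filter (fun x => x ≤ β) ⊆ (Finset.Icc 1 (r - l - 1)).image a := by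
      intro x hx
      rw [mem_filter] at hx
      obtain ⟨hxS, hxβ⟩ := hx
      obtain ⟨m, hm, hma⟩ := mem_image.1 (hSa hxS)
      rw [mem_Icc] at hm
      refine mem_image.2 ⟨m, mem_Icc.2 ⟨hm.1, ?_⟩, hma⟩
      by_contra hm2
      push_neg at hm2
      have : a (r - l) ≤ a m := amono (r - l) m (by omega) (by omega) hm.2
      omega
    have hhigh : S.filter (fun x => ¬ x ≤ β) ⊆ (Finset.Icc (j - l + 1) j).image c := by
      intro x hx
      rw [mem_filter] at hx
      obtain ⟨hxS, hxβ⟩ := hx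
      push_neg at hxβ
      obtain ⟨k, hk, hkc⟩ := mem_image.1 (hSc hxS)
      rw [mem_Icc] at hk
      refine mem_image.2 ⟨k, mem_Icc.2 ⟨?_, hk.2⟩, hkc⟩
      by_contra hk2
      push_neg at hk2
      have h1 : c k ≤ b k := hcb k hk.1 hk.2
      have h2 : b k ≤ β := bmono k (j - l) hk.1 (by omega) (by omega)
      omega
    have hc1 : (S.filter (fun x => x ≤ β)).card ≤ r - l - 1 := by
      calc (S.filter (fun x => x ≤ β)).card
          ≤ ((Finset.Icc 1 (r - l - 1)).image a).card := card_le_card hlow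
        _ ≤ (Finset.Icc 1 (r - l - 1)).card := card_image_le
        _ = r - l - 1 := by simp [Nat.card_Icc]
    have hc2 : (S.filter (fun x => ¬ x ≤ β)).card ≤ l := by
      have hlj : l < j := by omega
      calc (S.filter (fun x => ¬ x ≤ β)).card
          ≤ ((Finset.Icc (j - l + 1) j).image c).card := card_le_card hhigh
        _ ≤ (Finset.Icc (j - l + 1) j).card := card_image_le
        _ = l := by rw [Nat.card_Icc]; omega
    omega
  refine ⟨?_, key⟩
  -- existence part
  set m := j - rstar with hm
  have hjm : j = m + rstar := by omega
  set c : ℕ → ℕ := fun k => if k ≤ m then k else max k (a (k - m)) with hc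
  have hck : ∀ k, k ≤ c k := by
    intro k
    by_cases h : k ≤ m <;> simp [hc, h]
  have hcmono : ∀ r s, 1 ≤ r → r < s → s ≤ j → c r < c s := by
    intro r s h1 hrs hs
    by_cases hr : r ≤ m
    · by_cases hsm : s ≤ m
      · simpa [hc, hr, hsm] using hrs
      · have : r < max s (a (s - m)) := lt_of_lt_of_le hrs (le_max_left _ _)
        simpa [hc, hr, hsm] using this
    · have hsm : ¬ s ≤ m := by omega
      have ha : a (r - m) < a (s - m) :=
        hamono (r - m) (s - m) (by omega) (by omega) (by omega)
      have : max r (a (r - m)) < max s (a (s - m)) := max_lt_max hrs ha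
      simpa [hc, hr, hsm] using this
  have hcbd : ∀ k, 1 ≤ k → k ≤ j → 1 ≤ c k ∧ c k ≤ n := by
    intro k h1 h2
    refine ⟨le_trans h1 (hck k), ?_⟩
    by_cases h : k ≤ m
    · simp only [hc, if_pos h]; omega
    · have : a (k - m) ≤ n := haub (k - m) (by omega) (by omega)
      simp only [hc, if_neg h]
      exact max_le (by omega) this
  have hcb : ∀ k, 1 ≤ k → k ≤ j → c k ≤ b k := by
    intro k h1 h2
    have hkb := hbk k h1 h2
    by_cases h : k ≤ m
    · simp only [hc, if_pos h]; omega
    · have hl : j - k < rstar := by omega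
      have := hr2 (j - k) hl
      have hab : a (k - m) ≤ b k := by
        have e1 : rstar - (j - k) = k - m := by omega
        have e2 : j - (j - k) = k := by omega
        rwa [e1, e2] at this
      simp only [hc, if_neg h]
      exact max_le hkb hab
  refine ⟨c, hcmono, hcbd, hcb, ?_⟩
  refine le_antisymm (key c hcmono hcbd hcb) ?_
  -- lower bound: the image of a on [1, rstar] lies in the intersection
  have hsub : (Finset.Icc 1 rstar).image a ⊆
      ((Finset.Icc 1 j).image c) ∩ ((Finset.Icc 1 i).image a) := by
    intro x hx
    obtain ⟨t, ht, hta⟩ := mem_image.1 hx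
    rw [mem_Icc] at ht
    refine mem_inter.2 ⟨?_, mem_image.2 ⟨t, mem_Icc.2 ⟨ht.1, by omega⟩, hta⟩⟩
    by_cases hcase : t + m ≤ a t
    · -- a t sits at position t + m
      refine mem_image.2 ⟨t + m, mem_Icc.2 ⟨by omega, by omega⟩, ?_⟩
      have h1 : ¬ t + m ≤ m := by omega
      simp only [hc, if_neg h1]
      have : t + m - m = t := by omega
      rw [this, ← hta]
      exact max_eq_right hcase
    · -- a t < t + m : a t sits at position a t
      push_neg at hcase
      have hat1 : 1 ≤ a t := halb t ht.1 (by omega)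
      have hatj : a t ≤ j := by omega
      refine mem_image.2 ⟨a t, mem_Icc.2 ⟨hat1, hatj⟩, ?_⟩
      by_cases h : a t ≤ m
      · rw [← hta]; simp only [hc, if_pos h]
      · push_neg at h
        have ha2 : a (a t - m) < a t := by
          have : a t - m < t := by omega
          exact hamono (a t - m) t (by omega) this (by omega)
        simp only [hc, if_neg (not_le.2 h), ← hta]
        exact max_eq_left ha2.le
  have hinj : Set.InjOn a (Finset.Icc 1 rstar) := by
    intro p hp q hq hpq
    simp only [coe_Icc, Set.mem_Icc] at hp hq
    by_contra hne
    rcases Nat.lt_or_ge p q with h | h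
    · have := hamono p q hp.1 h (by omega); omega
    · have h' : q < p := by omega
      have := hamono q p hq.1 h' (by omega); omega
  calc rstar = (Finset.Icc 1 rstar).card := by simp [Nat.card_Icc]
    _ = ((Finset.Icc 1 rstar).image a).card := (card_image_of_injOn hinj).symm
    _ ≤ _ := card_le_card hsub
end

section
/- Let A = {a_1 < ... < a_i} and B = {b_1 < ... < b_j} be subsets of {1,...,n} with i ≤ j, and suppose not all of the inequalities a_{r+1} ≤ b_j, a_r ≤ b_{j-1}, ..., a_1 ≤ b_{j-r} hold (where r+1 ≤ i). Then for any size-j subset C = {c_1 < ... < c_j} of {1,...,n} with c_k ≤ b_k for all k, we have |C ∩ A| ≤ r. -/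
open Finset

/-- if not all of the inequalities `a (r+1) ≤ b j, …, a 1 ≤ b (j-r)`
hold, then every size-`j` subset `C` of `{1,…,n}` with `c k ≤ b k` for all `k`
satisfies `|C ∩ A| ≤ r`. -/
theorem intersection_bound (n i j r : ℕ) (hij : i ≤ j) (hjn : j ≤ n) (hri : r + 1 ≤ i)
    (a b : ℕ → ℕ)
    (hamono : ∀ p q, 1 ≤ p → p < q → q ≤ i → a p < a q)
    (halb : ∀ p, 1 ≤ p → p ≤ i → 1 ≤ a p)
    (haub : ∀ p, 1 ≤ p → p ≤ i → a p ≤ n)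
    (hbmono : ∀ p q, 1 ≤ p → p < q → q ≤ j → b p < b q)
    (hblb : ∀ p, 1 ≤ p → p ≤ j → 1 ≤ b p)
    (hbub : ∀ p, 1 ≤ p → p ≤ j → b p ≤ n)
    (hfail : ∃ l, l ≤ r ∧ b (j - l) < a (r + 1 - l)) :
    ∀ c : ℕ → ℕ,
      (∀ p q, 1 ≤ p → p < q → q ≤ j → c p < c q) →
      (∀ k, 1 ≤ k → k ≤ j → 1 ≤ c k ∧ c k ≤ n) →
      (∀ k, 1 ≤ k → k ≤ j → c k ≤ b k) →
      (((Finset.Icc 1 j).image c) ∩ ((Finset.Icc 1 i).image a)).card ≤ r := by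
  obtain ⟨l, hlr, hba⟩ := hfail
  intro c hcmono hcrange hcb
  set X := ((Finset.Icc 1 j).image c) ∩ ((Finset.Icc 1 i).image a) with hX
  set s := r + 1 - l with hs
  have hs1 : 1 ≤ s := by omega
  have hsi : s ≤ i := by omega
  have h1 : X.filter (fun x => x < a s) ⊆ (Finset.Icc 1 (s - 1)).image a := by
    intro x hx
    simp only [hX, Finset.mem_filter, Finset.mem_inter, Finset.mem_image,
      Finset.mem_Icc] at hx ⊢
    obtain ⟨⟨_, ⟨p, ⟨hp1, hpi⟩, hpx⟩⟩, hlt⟩ := hx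
    refine ⟨p, ⟨hp1, ?_⟩, hpx⟩
    by_contra hcon
    have hsp : s ≤ p := by omega
    have : a s ≤ a p := by
      rcases hsp.eq_or_lt with h' | h'
      · rw [h']
      · exact (hamono s p hs1 h' hpi).le
    omega
  have h2 : X.filter (fun x => ¬ x < a s) ⊆ (Finset.Icc (j - l + 1) j).image c := by
    intro x hx
    simp only [hX, Finset.mem_filter, Finset.mem_inter, Finset.mem_image,
      Finset.mem_Icc, not_lt] at hx ⊢
    obtain ⟨⟨⟨k, ⟨hk1, hkj⟩, hkx⟩, _⟩, hge⟩ := hx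
    refine ⟨k, ⟨?_, hkj⟩, hkx⟩
    by_contra hcon
    have hkjl : k ≤ j - l := by omega
    have hbk : b k ≤ b (j - l) := by
      rcases hkjl.eq_or_lt with h' | h'
      · rw [h']
      · exact (hbmono k (j - l) hk1 h' (by omega)).le
    have hck := hcb k hk1 hkj
    omega
  have hsplit := Finset.card_filter_add_card_filter_not
    (s := X) (p := fun x => x < a s)
  have hc1 : (X.filter (fun x => x < a s)).card ≤ s - 1 := by
    calc (X.filter (fun x => x < a s)).card
        ≤ ((Finset.Icc 1 (s - 1)).image a).card := Finset.card_le_card h1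
      _ ≤ (Finset.Icc 1 (s - 1)).card := Finset.card_image_le
      _ = s - 1 := by rw [Nat.card_Icc]; omega
  have hc2 : (X.filter (fun x => ¬ x < a s)).card ≤ l := by
    calc (X.filter (fun x => ¬ x < a s)).card
        ≤ ((Finset.Icc (j - l + 1) j).image c).card := Finset.card_le_card h2
      _ ≤ (Finset.Icc (j - l + 1) j).card := Finset.card_image_le
      _ = l := by rw [Nat.card_Icc]; omega
  omega
end

section
/- Let A = {a_1 < ... < a_i} and B = {b_1 < ... < b_j} be subsets of {1,...,n} with i ≤ j. Let r* be the largest r ∈ {0,...,i} such that a_{r-l} ≤ b_{j-l} for all l = 0,...,r-1. Then there exists a size-j subset C = {c_1 < ... < c_j} of {1,...,n} with {a_1,...,a_{r*}} ⊆ C and c_k ≤ b_k for all k; consequently max_{C ≤ B} |C ∩ A| ≥ r*. -/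
open Finset

lemma mono_self_le (f : ℕ → ℕ) (i : ℕ)
    (hmono : ∀ p q, 1 ≤ p → p < q → q ≤ i → f p < f q)
    (hlb : ∀ p, 1 ≤ p → p ≤ i → 1 ≤ f p) :
    ∀ k, 1 ≤ k → k ≤ i → k ≤ f k := by
  intro k
  induction k with
  | zero => omega
  | succ m ih =>
    intro _ hk
    rcases Nat.eq_or_lt_of_le (show 1 ≤ m + 1 from Nat.le_add_left 1 m) with h | h
    · have := hlb (m+1) (by omega) hk
      omega
    · have hm1 : 1 ≤ m := by omega
      have := ih hm1 (by omega)
      have := hmono m (m+1) hm1 (by omega) hk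
      omega

/-- with `r*` the largest `r ∈ {0,…,i}` with `a (r-l) ≤ b (j-l)` for
all `l < r`, there is a size-`j` subset `C` of `{1,…,n}` containing
`{a 1,…,a r*}` and dominated by `B` (`c k ≤ b k` for all `k`); consequently
`max_{C ≤ B} |C ∩ A| ≥ r*`. -/
theorem exists_dominated_subset (n i j : ℕ) (hij : i ≤ j) (hjn : j ≤ n)
    (a b : ℕ → ℕ)
    (hamono : ∀ p q, 1 ≤ p → p < q → q ≤ i → a p < a q)
    (halb : ∀ p, 1 ≤ p → p ≤ i → 1 ≤ a p)
    (haub : ∀ p, 1 ≤ p → p ≤ i → a p ≤ n)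
    (hbmono : ∀ p q, 1 ≤ p → p < q → q ≤ j → b p < b q)
    (hblb : ∀ p, 1 ≤ p → p ≤ j → 1 ≤ b p)
    (hbub : ∀ p, 1 ≤ p → p ≤ j → b p ≤ n)
    (rstar : ℕ) (hr1 : rstar ≤ i)
    (hr2 : ∀ l, l < rstar → a (rstar - l) ≤ b (j - l))
    (hr3 : ∀ r, r ≤ i → (∀ l, l < r → a (r - l) ≤ b (j - l)) → r ≤ rstar) :
    ∃ c : ℕ → ℕ,
      (∀ p q, 1 ≤ p → p < q → q ≤ j → c p < c q) ∧
      (∀ k, 1 ≤ k → k ≤ j → 1 ≤ c k ∧ c k ≤ n) ∧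
      (∀ k, 1 ≤ k → k ≤ j → c k ≤ b k) ∧
      ((Finset.Icc 1 rstar).image a ⊆ (Finset.Icc 1 j).image c) ∧
      rstar ≤ (((Finset.Icc 1 j).image c) ∩ ((Finset.Icc 1 i).image a)).card := by
  set m := j - rstar with hm
  have hrj : rstar ≤ j := le_trans hr1 hij
  refine ⟨fun k => if k ≤ m then k else max k (a (k - m)), ?_, ?_, ?_, ?_, ?_⟩
  -- strictly increasing
  · intro p q hp hpq hq
    by_cases hpm : p ≤ m
    · by_cases hqm : q ≤ m
      · simp [hpm, hqm, hpq]
      · simp only [if_pos hpm, if_neg hqm]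
        have : p < q := hpq
        exact lt_max_of_lt_left this
    · have hqm : ¬ q ≤ m := by omega
      simp only [if_neg hpm, if_neg hqm]
      have h1 : 1 ≤ p - m := by omega
      have h2 : p - m < q - m := by omega
      have h3 : q - m ≤ i := by omega
      have := hamono (p - m) (q - m) h1 h2 h3
      exact max_lt_max hpq this
  -- bounds
  · intro k hk hkj
    by_cases hkm : k ≤ m
    · simp only [if_pos hkm]; omega
    · simp only [if_neg hkm]
      constructor
      · exact le_max_of_le_left hk
      · have : a (k - m) ≤ n := haub (k - m) (by omega) (by omega)
        exact max_le (by omega) this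
  -- dominated by b
  · intro k hk hkj
    have hbk : k ≤ b k := mono_self_le b j hbmono hblb k hk hkj
    by_cases hkm : k ≤ m
    · simp only [if_pos hkm]; exact hbk
    · simp only [if_neg hkm]
      have hl : j - k < rstar := by omega
      have := hr2 (j - k) hl
      have h1 : rstar - (j - k) = k - m := by omega
      have h2 : j - (j - k) = k := by omega
      rw [h1, h2] at this
      exact max_le hbk this
  -- containment
  · intro x hx
    simp only [mem_image, mem_Icc] at hx ⊢
    obtain ⟨s, ⟨hs1, hs2⟩, rfl⟩ := hx
    have has : s ≤ a s := mono_self_le a i hamono halb s hs1 (by omega)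
    by_cases hbig : s + m ≤ a s
    · refine ⟨s + m, ⟨by omega, by omega⟩, ?_⟩
      by_cases hsm : s + m ≤ m
      · omega
      · simp only [if_neg hsm]
        have : s + m - m = s := by omega
        rw [this]
        exact max_eq_right hbig
    · refine ⟨a s, ⟨by omega, by omega⟩, ?_⟩
      by_cases hsm : a s ≤ m
      · simp [hsm]
      · simp only [if_neg hsm]
        have h1 : 1 ≤ a s - m := by omega
        have h2 : a s - m < s := by omega
        have := hamono (a s - m) s h1 h2 (by omega)
        exact max_eq_left (by omega)
  -- cardinality
  · have hsub : (Finset.Icc 1 rstar).image a ⊆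
        ((Finset.Icc 1 j).image (fun k => if k ≤ m then k else max k (a (k - m)))) ∩
        ((Finset.Icc 1 i).image a) := by
      intro x hx
      rw [mem_inter]
      constructor
      · -- reuse the containment argument
        simp only [mem_image, mem_Icc] at hx ⊢
        obtain ⟨s, ⟨hs1, hs2⟩, rfl⟩ := hx
        have has : s ≤ a s := mono_self_le a i hamono halb s hs1 (by omega)
        by_cases hbig : s + m ≤ a s
        · refine ⟨s + m, ⟨by omega, by omega⟩, ?_⟩
          by_cases hsm : s + m ≤ m
          · omega
          · simp only [if_neg hsm]
            have : s + m - m = s := by omega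
            rw [this]
            exact max_eq_right hbig
        · refine ⟨a s, ⟨by omega, by omega⟩, ?_⟩
          by_cases hsm : a s ≤ m
          · simp [hsm]
          · simp only [if_neg hsm]
            have h1 : 1 ≤ a s - m := by omega
            have h2 : a s - m < s := by omega
            have := hamono (a s - m) s h1 h2 (by omega)
            exact max_eq_left (by omega)
      · exact image_subset_image (Icc_subset_Icc_right hr1) hx
    have hcard : ((Finset.Icc 1 rstar).image a).card = rstar := by
      rw [Finset.card_image_of_injOn, Nat.card_Icc]
      · omega
      · intro p hp q hq hpq
        simp only [mem_coe, mem_Icc] at hp hq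
        by_contra hne
        rcases Nat.lt_or_ge p q with h | h
        · have := hamono p q hp.1 h (by omega); omega
        · have hlt : q < p := by omega
          have := hamono q p hq.1 hlt (by omega); omega
    calc rstar = ((Finset.Icc 1 rstar).image a).card := hcard.symm
      _ ≤ _ := Finset.card_le_card hsub
end

section
/- Let A = {a_1 < ... < a_i}, B = {b_1 < ... < b_j} ⊆ {1,...,n} with i ≤ j. Then max over size-j subsets C ≤ B of ⟨1_A, 1_C - 1_{{1,...,j}}⟩ equals |{r ∈ {1,...,i} : r ≤ j < a_r and a_{r-l} ≤ b_{j-l} for l = 0,...,r-1}|, where ⟨·,·⟩ is the standard inner product on ℤ^n and C ≤ B means c_k ≤ b_k for all k. -/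
open Finset

lemma smono_gap (N : ℕ) (f : ℕ → ℕ) (h : ∀ p q, 1 ≤ p → p < q → q ≤ N → f p < f q) :
    ∀ p q, 1 ≤ p → p ≤ q → q ≤ N → f p + (q - p) ≤ f q := by
  intro p q hp
  induction q with
  | zero => intro hpq hq; omega
  | succ q ih =>
    intro hpq hq
    rcases Nat.eq_or_lt_of_le hpq with h1 | h1
    · subst h1; omega
    · have h3 := ih (by omega) (by omega)
      have h2 : f q < f (q + 1) := h q (q + 1) (by omega) (by omega) hq
      omega

lemma smono_of_adj (N : ℕ) (f : ℕ → ℕ) (h : ∀ q, 1 ≤ q → q + 1 ≤ N → f q < f (q + 1)) :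
    ∀ p q, 1 ≤ p → p < q → q ≤ N → f p < f q := by
  intro p q hp
  induction q with
  | zero => intro h1 h2; omega
  | succ q ih =>
    intro h1 h2
    rcases Nat.lt_or_ge p q with h3 | h3
    · exact lt_trans (ih h3 (by omega)) (h q (by omega) h2)
    · have : p = q := by omega
      subst this
      exact h p hp h2

lemma mono_of_adj (N : ℕ) (f : ℕ → ℕ) (h : ∀ q, q + 1 ≤ N → f q ≤ f (q + 1)) :
    ∀ p q, p ≤ q → q ≤ N → f p ≤ f q := by
  intro p q
  induction q with
  | zero =>
    intro h1 h2
    have hp0 : p = 0 := Nat.le_zero.mp h1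
    exact le_of_eq (congrArg f hp0)
  | succ q ih =>
    intro h1 h2
    rcases Nat.lt_or_ge p (q + 1) with h3 | h3
    · exact le_trans (ih (by omega) (by omega)) (h q h2)
    · have : p = q + 1 := by omega
      subst this; exact le_rfl

lemma lower_card_iff (i : ℕ) (P : ℕ → Prop) [DecidablePred P]
    (hdc : ∀ p q, 1 ≤ p → p ≤ q → q ≤ i → P q → P p) (r : ℕ) (h1 : 1 ≤ r) (h2 : r ≤ i) :
    (P r ↔ r ≤ ((Icc 1 i).filter P).card) := by
  constructor
  · intro hr
    have hsub : Icc 1 r ⊆ (Icc 1 i).filter P := by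
      intro x hx
      simp only [mem_Icc] at hx
      simp only [mem_filter, mem_Icc]
      exact ⟨⟨hx.1, le_trans hx.2 h2⟩, hdc x r hx.1 hx.2 h2 hr⟩
    have := Finset.card_le_card hsub
    simp only [Nat.card_Icc] at this
    omega
  · intro hs
    by_contra hr
    have hsub : (Icc 1 i).filter P ⊆ Icc 1 (r - 1) := by
      intro x hx
      simp only [mem_filter, mem_Icc] at hx ⊢
      refine ⟨hx.1.1, ?_⟩
      by_contra hxr
      exact hr (hdc r x h1 (by omega) hx.1.2 hx.2)
    have := Finset.card_le_card hsub
    simp only [Nat.card_Icc] at this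
    omega

lemma sum_ind (n : ℕ) (A C J : Finset ℕ) (hA : A ⊆ Icc 1 n) :
    ∑ m ∈ Icc 1 n, ind A m * (ind C m - ind J m)
      = ((A ∩ C).card : ℤ) - ((A ∩ J).card : ℤ) := by
  have key : ∀ D : Finset ℕ, ∑ m ∈ Icc 1 n, ind A m * ind D m = ((A ∩ D).card : ℤ) := by
    intro D
    have h1 : ∀ m ∈ Icc 1 n, ind A m * ind D m = if m ∈ A ∩ D then (1 : ℤ) else 0 := by
      intro m _
      by_cases h1 : m ∈ A <;> by_cases h2 : m ∈ D <;>
        simp [ind, Finset.mem_inter, h1, h2]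
    rw [Finset.sum_congr rfl h1, Finset.sum_ite_mem]
    have h2 : Icc 1 n ∩ (A ∩ D) = A ∩ D :=
      Finset.inter_eq_right.mpr (le_trans Finset.inter_subset_left hA)
    rw [h2]
    simp
  have h3 : ∀ m ∈ Icc 1 n, ind A m * (ind C m - ind J m) = ind A m * ind C m - ind A m * ind J m :=
    fun m _ => by ring
  rw [Finset.sum_congr rfl h3, Finset.sum_sub_distrib, key C, key J]

lemma image_inter_eq (i : ℕ) (a : ℕ → ℕ) (D : Finset ℕ) :
    (Icc 1 i).image a ∩ D = ((Icc 1 i).filter (fun r => a r ∈ D)).image a := by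
  ext x
  simp only [mem_inter, mem_image, mem_filter]
  constructor
  · rintro ⟨⟨r, hr, rfl⟩, hx⟩; exact ⟨r, ⟨hr, hx⟩, rfl⟩
  · rintro ⟨r, ⟨hr, hx⟩, rfl⟩; exact ⟨⟨r, hr, rfl⟩, hx⟩

lemma inter_card_eq (i : ℕ) (a : ℕ → ℕ)
    (hinj : Set.InjOn a ↑(Icc 1 i)) (D : Finset ℕ) :
    ((Icc 1 i).image a ∩ D).card = ((Icc 1 i).filter (fun r => a r ∈ D)).card := by
  rw [image_inter_eq]
  exact Finset.card_image_of_injOn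
    (hinj.mono (Finset.coe_subset.mpr (Finset.filter_subset _ _)))
/-- the maximum over size-`j` subsets `C ≤ B` of
`⟨1_A, 1_C - 1_{{1,…,j}}⟩` equals
`|{r ∈ [1,i] : r ≤ j < a r and a (r-l) ≤ b (j-l) for all l < r}|`
(which is `dim Hom(N(A), N(B))`). -/
theorem max_pairing_eq_homdim (n i j : ℕ) (hij : i ≤ j) (hjn : j ≤ n)
    (a b : ℕ → ℕ)
    (hamono : ∀ p q, 1 ≤ p → p < q → q ≤ i → a p < a q)
    (halb : ∀ p, 1 ≤ p → p ≤ i → 1 ≤ a p)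
    (haub : ∀ p, 1 ≤ p → p ≤ i → a p ≤ n)
    (hbmono : ∀ p q, 1 ≤ p → p < q → q ≤ j → b p < b q)
    (hblb : ∀ p, 1 ≤ p → p ≤ j → 1 ≤ b p)
    (hbub : ∀ p, 1 ≤ p → p ≤ j → b p ≤ n) :
    (∃ c : ℕ → ℕ,
        (∀ p q, 1 ≤ p → p < q → q ≤ j → c p < c q) ∧
        (∀ k, 1 ≤ k → k ≤ j → 1 ≤ c k ∧ c k ≤ n) ∧
        (∀ k, 1 ≤ k → k ≤ j → c k ≤ b k) ∧
        (∑ m ∈ Finset.Icc 1 n, ind ((Finset.Icc 1 i).image a) m *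
            (ind ((Finset.Icc 1 j).image c) m - ind (Finset.Icc 1 j) m))
          = (((Finset.Icc 1 i).filter
              (fun r => r ≤ j ∧ j < a r ∧ ∀ l, l < r → a (r - l) ≤ b (j - l))).card : ℤ)) ∧
    (∀ c : ℕ → ℕ,
        (∀ p q, 1 ≤ p → p < q → q ≤ j → c p < c q) →
        (∀ k, 1 ≤ k → k ≤ j → 1 ≤ c k ∧ c k ≤ n) →
        (∀ k, 1 ≤ k → k ≤ j → c k ≤ b k) →
        (∑ m ∈ Finset.Icc 1 n, ind ((Finset.Icc 1 i).image a) m *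
            (ind ((Finset.Icc 1 j).image c) m - ind (Finset.Icc 1 j) m))
          ≤ (((Finset.Icc 1 i).filter
              (fun r => r ≤ j ∧ j < a r ∧ ∀ l, l < r → a (r - l) ≤ b (j - l))).card : ℤ)) := by
  -- basic monotonicity consequences
  have hamle : ∀ p q, 1 ≤ p → p ≤ q → q ≤ i → a p ≤ a q := by
    intro p q h1 h2 h3
    rcases Nat.eq_or_lt_of_le h2 with h | h
    · exact le_of_eq (congrArg a h)
    · exact le_of_lt (hamono p q h1 h h3)
  have hbmle : ∀ p q, 1 ≤ p → p ≤ q → q ≤ j → b p ≤ b q := by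
    intro p q h1 h2 h3
    rcases Nat.eq_or_lt_of_le h2 with h | h
    · exact le_of_eq (congrArg b h)
    · exact le_of_lt (hbmono p q h1 h h3)
  have hbk : ∀ k, 1 ≤ k → k ≤ j → k ≤ b k := by
    intro k h1 h2
    have hg := smono_gap j b hbmono 1 k le_rfl h1 h2
    have hb1 := hblb 1 (by omega) (by omega)
    omega
  have hainj : Set.InjOn a ↑(Icc 1 i) := by
    intro p hp q hq h
    simp only [coe_Icc, Set.mem_Icc] at hp hq
    by_contra hne
    rcases Nat.lt_or_ge p q with h' | h'
    · exact absurd h (ne_of_lt (hamono p q hp.1 h' hq.2))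
    · have h'' : q < p := by omega
      exact absurd h.symm (ne_of_lt (hamono q p hq.1 h'' hp.2))
  set s := ((Icc 1 i).filter (fun r => a r ≤ j)).card with hs_def
  have hs_iff : ∀ r, 1 ≤ r → r ≤ i → (a r ≤ j ↔ r ≤ s) := by
    intro r h1 h2
    exact lower_card_iff i (fun r => a r ≤ j)
      (fun p q hp hpq hq hQ => le_trans (hamle p q hp hpq hq) hQ) r h1 h2
  set F := (Icc 1 i).filter
      (fun r => r ≤ j ∧ j < a r ∧ ∀ l, l < r → a (r - l) ≤ b (j - l)) with hF_def
  -- the sum formula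
  have hA : (Icc 1 i).image a ⊆ Icc 1 n := by
    intro x hx
    simp only [mem_image, mem_Icc] at hx
    obtain ⟨r, hr, rfl⟩ := hx
    simp only [mem_Icc]
    exact ⟨halb r hr.1 hr.2, haub r hr.1 hr.2⟩
  have hsum : ∀ c : ℕ → ℕ,
      (∑ m ∈ Icc 1 n, ind ((Icc 1 i).image a) m *
          (ind ((Icc 1 j).image c) m - ind (Icc 1 j) m))
        = ((((Icc 1 i).filter (fun r => a r ∈ (Icc 1 j).image c)).card : ℤ) - (s : ℤ)) := by
    intro c
    rw [sum_ind n _ _ _ hA, inter_card_eq i a hainj ((Icc 1 j).image c),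
      inter_card_eq i a hainj (Icc 1 j)]
    rw [hs_def]
    congr 2
    congr 1
    apply Finset.filter_congr
    intro r hr
    simp only [mem_Icc] at hr
    simp [mem_Icc, halb r hr.1 hr.2]
  -- chain condition derived from any admissible c
  have hchain : ∀ c : ℕ → ℕ,
      (∀ k, 1 ≤ k → k ≤ j → c k ≤ b k) →
      (((Icc 1 i).filter (fun r => a r ∈ (Icc 1 j).image c)).card ≤ j ∧
        ∀ l, l < ((Icc 1 i).filter (fun r => a r ∈ (Icc 1 j).image c)).card →
          a (((Icc 1 i).filter (fun r => a r ∈ (Icc 1 j).image c)).card - l) ≤ b (j - l)) := by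
    intro c hcb
    set R := (Icc 1 i).filter (fun r => a r ∈ (Icc 1 j).image c) with hR_def
    set M := R.card with hM_def
    have hRsub : R ⊆ Icc 1 i := Finset.filter_subset _ _
    have hMj : M ≤ j := by
      have h1 : M ≤ ((Icc 1 j).image c).card := by
        apply Finset.card_le_card_of_injOn a
        · intro r hr
          exact (Finset.mem_filter.mp hr).2
        · exact hainj.mono (Finset.coe_subset.mpr hRsub)
      have h2 : ((Icc 1 j).image c).card ≤ (Icc 1 j).card := Finset.card_image_le
      simp only [Nat.card_Icc] at h2
      omega
    refine ⟨hMj, ?_⟩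
    intro l hl
    by_contra hcon
    push_neg at hcon
    set R' := R.filter (fun r => M - l ≤ r) with hR'_def
    have hR'card : l + 1 ≤ R'.card := by
      have hsplit : R'.card + (R.filter (fun r => ¬ (M - l ≤ r))).card = M := by
        rw [hM_def, hR'_def]
        simpa using Finset.card_filter_add_card_filter_not
          (s := R) (p := fun r => M - l ≤ r)
      have hlow : (R.filter (fun r => ¬ (M - l ≤ r))).card ≤ M - l - 1 := by
        have hsub : R.filter (fun r => ¬ (M - l ≤ r)) ⊆ Icc 1 (M - l - 1) := by
          intro x hx
          simp only [Finset.mem_filter, not_le] at hx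
          have hx1 := Finset.mem_Icc.mp (hRsub hx.1)
          simp only [mem_Icc]
          omega
        have := Finset.card_le_card hsub
        simp only [Nat.card_Icc] at this
        omega
      omega
    have hmap : ∀ r ∈ R', a r ∈ ((Icc 1 j).image c).filter (fun x => b (j - l) < x) := by
      intro r hr
      simp only [hR'_def, Finset.mem_filter] at hr
      have hrIcc := Finset.mem_Icc.mp (hRsub hr.1)
      refine Finset.mem_filter.mpr ⟨(Finset.mem_filter.mp hr.1).2, ?_⟩
      have hle : a (M - l) ≤ a r := hamle (M - l) r (by omega) hr.2 hrIcc.2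
      omega
    have hinj' : Set.InjOn a ↑R' :=
      hainj.mono (Finset.coe_subset.mpr (le_trans (Finset.filter_subset _ _) hRsub))
    have h1 : R'.card ≤ (((Icc 1 j).image c).filter (fun x => b (j - l) < x)).card :=
      Finset.card_le_card_of_injOn a hmap hinj'
    have h2 : ((Icc 1 j).image c).filter (fun x => b (j - l) < x) ⊆ (Icc (j - l + 1) j).image c := by
      intro x hx
      simp only [Finset.mem_filter, Finset.mem_image, mem_Icc] at hx ⊢
      obtain ⟨⟨k, hk, rfl⟩, hbx⟩ := hx
      refine ⟨k, ⟨?_, hk.2⟩, rfl⟩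
      by_contra hkle
      push_neg at hkle
      have hc1 : c k ≤ b k := hcb k hk.1 hk.2
      have hc2 : b k ≤ b (j - l) := hbmle k (j - l) hk.1 (by omega) (by omega)
      omega
    have h3 : ((Icc (j - l + 1) j).image c).card ≤ l := by
      have h4 : ((Icc (j - l + 1) j).image c).card ≤ (Icc (j - l + 1) j).card :=
        Finset.card_image_le
      simp only [Nat.card_Icc] at h4
      omega
    have h5 := Finset.card_le_card h2
    omega
  -- chain condition implies Ioc s M ⊆ F
  have hIoc : ∀ M, M ≤ i → M ≤ j → (∀ l, l < M → a (M - l) ≤ b (j - l)) →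
      Ioc s M ⊆ F := by
    intro M hMi hMj hch r hr
    rw [Finset.mem_Ioc] at hr
    have hr1 : 1 ≤ r := by omega
    have hri : r ≤ i := le_trans hr.2 hMi
    rw [hF_def, Finset.mem_filter]
    refine ⟨Finset.mem_Icc.mpr ⟨hr1, hri⟩, le_trans hr.2 hMj, ?_, ?_⟩
    · by_contra hle
      push_neg at hle
      have := (hs_iff r hr1 hri).mp hle
      omega
    · intro l hl
      have hl' : l + (M - r) < M := by omega
      have hch' := hch (l + (M - r)) hl'
      have he1 : M - (l + (M - r)) = r - l := by omega
      have he2 : b (j - (l + (M - r))) ≤ b (j - l) := by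
        apply hbmle <;> omega
      rw [he1] at hch'
      exact le_trans hch' he2
  -- the upper bound
  have hupper : ∀ c : ℕ → ℕ,
      (∀ p q, 1 ≤ p → p < q → q ≤ j → c p < c q) →
      (∀ k, 1 ≤ k → k ≤ j → 1 ≤ c k ∧ c k ≤ n) →
      (∀ k, 1 ≤ k → k ≤ j → c k ≤ b k) →
      (∑ m ∈ Icc 1 n, ind ((Icc 1 i).image a) m *
          (ind ((Icc 1 j).image c) m - ind (Icc 1 j) m)) ≤ (F.card : ℤ) := by
    intro c h1 h2 h3
    rw [hsum c]
    obtain ⟨hMj, hch⟩ := hchain c h3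
    set M := ((Icc 1 i).filter (fun r => a r ∈ (Icc 1 j).image c)).card with hM_def
    have hMi : M ≤ i := by
      have := Finset.card_filter_le (Icc 1 i) (fun r => a r ∈ (Icc 1 j).image c)
      simp only [Nat.card_Icc] at this
      omega
    rcases le_or_gt M s with h | h
    · have h0 : (0 : ℤ) ≤ (F.card : ℤ) := Int.ofNat_nonneg _
      omega
    · have hsub := hIoc M hMi hMj hch
      have hcard := Finset.card_le_card hsub
      rw [Nat.card_Ioc] at hcard
      omega
  refine ⟨?_, hupper⟩
  by_cases hFne : F.Nonempty
  · -- nonempty case: construct the optimal c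
    set T := F.max' hFne with hT_def
    have hTF : T ∈ F := F.max'_mem hFne
    rw [hF_def, Finset.mem_filter] at hTF
    obtain ⟨hTIcc, hTj, hTa, hTch⟩ := hTF
    rw [Finset.mem_Icc] at hTIcc
    have hT1 : 1 ≤ T := hTIcc.1
    have hTi : T ≤ i := hTIcc.2
    have hsT : s < T := by
      by_contra hc
      push_neg at hc
      have := (hs_iff T hT1 hTi).mpr hc
      omega
    have hFeq : F = Ioc s T := by
      apply Finset.Subset.antisymm
      · intro r hr
        have hrT : r ≤ T := Finset.le_max' F r hr
        rw [hF_def, Finset.mem_filter, Finset.mem_Icc] at hr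
        rw [Finset.mem_Ioc]
        refine ⟨?_, hrT⟩
        by_contra hc
        push_neg at hc
        have := (hs_iff r hr.1.1 hr.1.2).mpr hc
        omega
      · exact hIoc T hTi hTj hTch
    have hFcard : F.card = T - s := by rw [hFeq, Nat.card_Ioc]
    -- the construction
    set p : ℕ → ℕ := fun q => min (a q) (j - T + q) with hp_def
    set E : ℕ → ℕ := fun q => if q = 0 then 0 else a q - (j - T + q) with hE_def
    set Q : ℕ → ℕ := fun k => ((Icc 1 T).filter (fun q => p q ≤ k)).card with hQ_def
    set c : ℕ → ℕ := fun k => k + E (Q k) with hc_def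
    have hpmono : ∀ q1 q2, 1 ≤ q1 → q1 < q2 → q2 ≤ T → p q1 < p q2 := by
      apply smono_of_adj
      intro q h1 h2
      have ha : a q < a (q + 1) := hamono q (q + 1) h1 (by omega) (le_trans h2 hTi)
      simp only [hp_def]
      apply lt_min
      · exact lt_of_le_of_lt (min_le_left _ _) ha
      · exact lt_of_le_of_lt (min_le_right _ _) (by omega)
    have hpmle : ∀ q1 q2, 1 ≤ q1 → q1 ≤ q2 → q2 ≤ T → p q1 ≤ p q2 := by
      intro q1 q2 h1 h2 h3
      rcases Nat.eq_or_lt_of_le h2 with h | h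
      · exact le_of_eq (congrArg p h)
      · exact le_of_lt (hpmono q1 q2 h1 h h3)
    have hpbd : ∀ q, 1 ≤ q → q ≤ T → 1 ≤ p q ∧ p q ≤ j := by
      intro q h1 h2
      have ha1 : 1 ≤ a q := halb q h1 (le_trans h2 hTi)
      constructor
      · simp only [hp_def]
        exact le_min ha1 (by omega)
      · exact le_trans (min_le_right _ _) (by omega)
    have hQ_iff : ∀ k q, 1 ≤ q → q ≤ T → (p q ≤ k ↔ q ≤ Q k) := by
      intro k q h1 h2
      exact lower_card_iff T (fun q => p q ≤ k)
        (fun q1 q2 hq1 hq12 hq2 hle => le_trans (hpmle q1 q2 hq1 hq12 hq2) hle) q h1 h2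
    have hQT : ∀ k, Q k ≤ T := by
      intro k
      have := Finset.card_filter_le (Icc 1 T) (fun q => p q ≤ k)
      simp only [Nat.card_Icc] at this
      simp only [hQ_def]
      omega
    have hQmono : ∀ k1 k2, k1 ≤ k2 → Q k1 ≤ Q k2 := by
      intro k1 k2 h
      simp only [hQ_def]
      apply Finset.card_le_card
      intro x hx
      rw [Finset.mem_filter] at hx ⊢
      exact ⟨hx.1, le_trans hx.2 h⟩
    have hEmono : ∀ q1 q2, q1 ≤ q2 → q2 ≤ T → E q1 ≤ E q2 := by
      apply mono_of_adj
      intro q hq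
      by_cases h0 : q = 0
      · subst h0
        simp [hE_def]
      · have ha : a q < a (q + 1) := hamono q (q + 1) (by omega) (by omega) (le_trans hq hTi)
        simp only [hE_def, if_neg h0, if_neg (Nat.succ_ne_zero q)]
        omega
    have hcmono : ∀ k1 k2, k1 ≤ k2 → c k1 ≤ c k2 := by
      intro k1 k2 h
      have hE := hEmono (Q k1) (Q k2) (hQmono k1 k2 h) (hQT k2)
      simp only [hc_def]
      omega
    have hcstrict : ∀ k1 k2, 1 ≤ k1 → k1 < k2 → k2 ≤ j → c k1 < c k2 := by
      intro k1 k2 _ h _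
      have hE := hEmono (Q k1) (Q k2) (hQmono k1 k2 (by omega)) (hQT k2)
      simp only [hc_def]
      omega
    have hcb : ∀ k, 1 ≤ k → k ≤ j → c k ≤ b k := by
      intro k h1 h2
      by_cases hq0 : Q k = 0
      · have hE0 : E (Q k) = 0 := by
          rw [hq0]
          simp [hE_def]
        simp only [hc_def, hE0]
        have := hbk k h1 h2
        omega
      · have hq1 : 1 ≤ Q k := Nat.pos_of_ne_zero hq0
        have hqT : Q k ≤ T := hQT k
        have hpk : p (Q k) ≤ k := (hQ_iff k (Q k) hq1 hqT).mpr le_rfl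
        have hEq : E (Q k) = a (Q k) - (j - T + Q k) := by
          simp only [hE_def, if_neg hq0]
        by_cases hcase : a (Q k) ≤ j - T + Q k
        · have hE0 : E (Q k) = 0 := by omega
          simp only [hc_def, hE0]
          have := hbk k h1 h2
          omega
        · push_neg at hcase
          have hpq : p (Q k) = j - T + Q k := by
            simp only [hp_def]
            omega
          have hqb : a (Q k) ≤ b (j - T + Q k) := by
            have hch := hTch (T - Q k) (by omega)
            have e1 : T - (T - Q k) = Q k := by omega
            have e2 : j - (T - Q k) = j - T + Q k := by omega
            rw [e1, e2] at hch
            exact hch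
          have hp1 : 1 ≤ p (Q k) := (hpbd (Q k) hq1 hqT).1
          have hgap : b (p (Q k)) + (k - p (Q k)) ≤ b k :=
            smono_gap j b hbmono (p (Q k)) k hp1 hpk h2
          rw [hpq] at hgap
          simp only [hc_def, hEq]
          omega
    have hcpq : ∀ q, 1 ≤ q → q ≤ T → c (p q) = a q := by
      intro q h1 h2
      have hQQ : Q (p q) = q := by
        have hle : q ≤ Q (p q) := (hQ_iff (p q) q h1 h2).mp le_rfl
        by_contra hne
        have h3 : q + 1 ≤ Q (p q) := by omega
        have h4 : q + 1 ≤ T := le_trans h3 (hQT _)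
        have h5 : p (q + 1) ≤ p q := (hQ_iff (p q) (q + 1) (by omega) h4).mpr h3
        exact absurd h5 (not_le.mpr (hpmono q (q + 1) h1 (by omega) h4))
      have hEq : E q = a q - (j - T + q) := by
        simp only [hE_def, if_neg (by omega : ¬ q = 0)]
      have hcp : c (p q) = p q + E q := by
        simp only [hc_def]
        rw [hQQ]
      rw [hcp, hEq]
      by_cases hcase : a q ≤ j - T + q
      · have h6 : p q = a q := by
          simp only [hp_def]
          omega
        rw [h6]
        omega
      · push_neg at hcase
        have h6 : p q = j - T + q := by
          simp only [hp_def]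
          omega
        rw [h6]
        omega
    have hpT : p T = j := by
      simp only [hp_def]
      omega
    have hcj : c j = a T := by
      have := hcpq T hT1 le_rfl
      rw [hpT] at this
      exact this
    have hcbd : ∀ k, 1 ≤ k → k ≤ j → 1 ≤ c k ∧ c k ≤ n := by
      intro k h1 h2
      constructor
      · simp only [hc_def]
        omega
      · exact le_trans (hcb k h1 h2) (hbub k h1 h2)
    have hRset : (Icc 1 i).filter (fun r => a r ∈ (Icc 1 j).image c) = Icc 1 T := by
      apply Finset.Subset.antisymm
      · intro r hr
        simp only [Finset.mem_filter, Finset.mem_image, mem_Icc] at hr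
        obtain ⟨⟨hr1, hri⟩, k, hk, hck⟩ := hr
        rw [Finset.mem_Icc]
        refine ⟨hr1, ?_⟩
        by_contra hrT
        push_neg at hrT
        have h1 : c k ≤ c j := hcmono k j hk.2
        rw [hcj] at h1
        have h2 : a T < a r := hamono T r hT1 hrT hri
        omega
      · intro q hq
        rw [Finset.mem_Icc] at hq
        simp only [Finset.mem_filter, Finset.mem_image, mem_Icc]
        exact ⟨⟨hq.1, le_trans hq.2 hTi⟩,
          p q, ⟨(hpbd q hq.1 hq.2).1, (hpbd q hq.1 hq.2).2⟩, hcpq q hq.1 hq.2⟩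
    refine ⟨c, fun k1 k2 h1 h2 h3 => hcstrict k1 k2 h1 h2 h3, hcbd, hcb, ?_⟩
    rw [hsum c, hRset, hFcard]
    simp only [Nat.card_Icc]
    push_cast
    omega
  · -- F is empty: take c = id
    have hF0 : F.card = 0 := by
      rw [Finset.not_nonempty_iff_eq_empty.mp hFne, Finset.card_empty]
    refine ⟨fun k => k, fun p q _ h _ => h, fun k h1 h2 => ⟨h1, le_trans h2 hjn⟩,
      fun k h1 h2 => hbk k h1 h2, ?_⟩
    rw [hsum (fun k => k), hF0]
    have himg : (Icc 1 j).image (fun k => k) = Icc 1 j := Finset.image_id'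
    rw [himg]
    have hfc : (Icc 1 i).filter (fun r => a r ∈ Icc 1 j)
        = (Icc 1 i).filter (fun r => a r ≤ j) := by
      apply Finset.filter_congr
      intro r hr
      simp only [mem_Icc] at hr
      simp [mem_Icc, halb r hr.1 hr.2]
    rw [hfc, ← hs_def]
    simp
end

section
/- Let A = {a_1 < ... < a_i} ⊆ {1,...,n} with A ≠ {1,...,i}. Define the Maya module N(A) over the preprojective algebra of type A_{n-1} (leftward orientation): it has basis w_{k,r} for r = 1,...,i and k = r,...,a_r - 1, with w_{k,r} in grading degree k, and structure maps (k → k-1)(w_{k,r}) = w_{k-1,r} (zero if k-1 < r) and (k → k+1)(w_{k,r}) = w_{k+1,r+1} (zero if no such basis vector exists). Then these maps satisfy the preprojective relations: (k+1 → k)∘(k → k+1) = (k-1 → k)∘(k → k-1) on N(A)_k for all k = 1,...,n-1 (with the conventions (1→0) = 0 and (n-1→n) = 0). -/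
open Finset

/-- Basis index set of the Maya module `N(A)`: pairs encoded as `r` with
`1 ≤ r ≤ i`, `r ≤ k < a r`, for the column `k`. -/
abbrev MayaIdx (a : ℕ → ℕ) (i k : ℕ) : Type :=
  {r : ℕ // 1 ≤ r ∧ r ≤ i ∧ r ≤ k ∧ k < a r}

/-- Degree-`k` component of the Maya module `N(A)` (coordinates on basis `w_{k,r}`). -/
abbrev MayaV (a : ℕ → ℕ) (i k : ℕ) : Type := MayaIdx a i k → ℂ

/-- The map `(k+1 → k)` of the Maya module: `w_{k+1,r} ↦ w_{k,r}` (zero when out of range). -/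
noncomputable def mayaDown (a : ℕ → ℕ) (i k : ℕ) : MayaV a i (k + 1) →ₗ[ℂ] MayaV a i k where
  toFun f s := if h : k + 1 < a s.1 then
      f ⟨s.1, s.2.1, s.2.2.1, Nat.le_succ_of_le s.2.2.2.1, h⟩ else 0
  map_add' f g := by
    funext s; by_cases h : k + 1 < a s.1 <;> simp [h]
  map_smul' c f := by
    funext s; by_cases h : k + 1 < a s.1 <;> simp [h]

/-- The map `(k → k+1)` of the Maya module: `w_{k,r} ↦ w_{k+1,r+1}` (zero when out of range). -/
noncomputable def mayaUp (a : ℕ → ℕ) (i k : ℕ) : MayaV a i k →ₗ[ℂ] MayaV a i (k + 1) where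
  toFun f s := if h : 1 ≤ s.1 - 1 ∧ s.1 - 1 ≤ i ∧ s.1 - 1 ≤ k ∧ k < a (s.1 - 1) then
      f ⟨s.1 - 1, h⟩ else 0
  map_add' f g := by
    funext s
    by_cases h : 1 ≤ s.1 - 1 ∧ s.1 - 1 ≤ i ∧ s.1 - 1 ≤ k ∧ k < a (s.1 - 1)
    · simp only [dif_pos h, Pi.add_apply]
    · simp only [dif_neg h, Pi.add_apply, add_zero]
  map_smul' c f := by
    funext s
    by_cases h : 1 ≤ s.1 - 1 ∧ s.1 - 1 ≤ i ∧ s.1 - 1 ≤ k ∧ k < a (s.1 - 1)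
    · simp only [dif_pos h, Pi.smul_apply, RingHom.id_apply]
    · simp only [dif_neg h, Pi.smul_apply, smul_zero, RingHom.id_apply]

/-- the structure maps of the Maya module `N(A)` satisfy the
preprojective relations `(k+1 → k)∘(k → k+1) = (k-1 → k)∘(k → k-1)` at every
vertex (with the boundary conventions). -/
theorem maya_preprojective_relations (n i : ℕ) (hn : 2 ≤ n) (hi1 : 1 ≤ i) (hin : i < n)
    (a : ℕ → ℕ)
    (hmono : ∀ r s, 1 ≤ r → r < s → s ≤ i → a r < a s)
    (hlb : ∀ r, 1 ≤ r → r ≤ i → 1 ≤ a r)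
    (hub : ∀ r, 1 ≤ r → r ≤ i → a r ≤ n)
    (hne : i < a i) :
    ∀ k, (mayaDown a i (k + 1)).comp (mayaUp a i (k + 1))
        = (mayaUp a i k).comp (mayaDown a i k) := by
  intro k
  apply LinearMap.ext
  intro f
  funext s
  obtain ⟨r, h1, h2, h3, h4⟩ := s
  simp only [LinearMap.comp_apply, mayaDown, mayaUp, LinearMap.coe_mk, AddHom.coe_mk]
  by_cases hr : 1 ≤ r - 1
  · have hmr : a (r - 1) < a r := hmono (r - 1) r hr (by omega) h2
    split_ifs <;> first | rfl | omega
  · split_ifs <;> first | rfl | omega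
end

section
/- Let N(A) be the Maya module for A = {a_1 < ... < a_i} ⊆ {1,...,n}, A ≠ {1,...,i}, over the type A_{n-1} preprojective algebra. Then the socle of N(A) is one-dimensional, spanned by w_{i,i}: that is, the set {v ∈ N(A)_k : (k→k+1)(v) = 0 and (k→k-1)(v) = 0} is zero for k ≠ i and is the span of w_{i,i} for k = i. -/
open Finset

/-- the socle of the Maya module `N(A)` is one-dimensional, spanned
by `w_{i,i}`: in each degree `k+1 ≠ i` the simultaneous kernel of the two outgoing
maps is zero, and in degree `i` it is the span of `w_{i,i}`. -/
theorem maya_socle (n i : ℕ) (hn : 2 ≤ n) (hi1 : 1 ≤ i) (hin : i < n)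
    (a : ℕ → ℕ)
    (hmono : ∀ r s, 1 ≤ r → r < s → s ≤ i → a r < a s)
    (hlb : ∀ r, 1 ≤ r → r ≤ i → 1 ≤ a r)
    (hub : ∀ r, 1 ≤ r → r ≤ i → a r ≤ n)
    (hne : i < a i) :
    (∀ k, ∀ v : MayaV a i (k + 1),
        mayaUp a i (k + 1) v = 0 → mayaDown a i k v = 0 →
        (k + 1 ≠ i → v = 0) ∧
        (k + 1 = i → ∃ c : ℂ, v = fun s => if s.1 = i then c else 0)) ∧
    (∀ k, k + 1 = i →
        mayaUp a i (k + 1) (fun s => if s.1 = i then (1 : ℂ) else 0) = 0 ∧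
        mayaDown a i k (fun s => if s.1 = i then (1 : ℂ) else 0) = 0) := by
  refine ⟨?_, ?_⟩
  · intro k v hup hdown
    have hdown' : ∀ s : MayaIdx a i (k+1), s.1 ≤ k → v s = 0 := by
      intro s hs
      have h2 : k < a s.1 := Nat.lt_of_succ_lt s.2.2.2.2
      have := congrFun hdown ⟨s.1, s.2.1, s.2.2.1, hs, h2⟩
      simp only [mayaDown, LinearMap.coe_mk, AddHom.coe_mk, Pi.zero_apply,
        dif_pos s.2.2.2.2] at this
      exact (congrArg v (Subtype.ext rfl)).trans this
    have hall : ∀ s : MayaIdx a i (k+1), s.1 ≠ i → v s = 0 := by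
      intro s hsne
      rcases Nat.lt_or_ge s.1 (k+1) with h | h
      · exact hdown' s (Nat.lt_succ_iff.mp h)
      · have hseq : s.1 = k + 1 := le_antisymm s.2.2.2.1 h
        have hklt : k + 1 < i := by have := s.2.2.1; omega
        have ha1 : k + 1 < a (k+1) := by have h4 := s.2.2.2.2; rw [hseq] at h4; exact h4
        have ha2 : a (k+1) < a (k+2) :=
          hmono _ _ (Nat.le_add_left 1 k) (Nat.lt_succ_self _) hklt
        have ha3 : k + 2 < a (k+2) := lt_of_le_of_lt (Nat.succ_le_of_lt ha1) ha2
        have hcond : 1 ≤ (k+2) - 1 ∧ (k+2) - 1 ≤ i ∧ (k+2) - 1 ≤ (k+1) ∧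
            (k+1) < a ((k+2)-1) := by
          refine ⟨by omega, by omega, by omega, ?_⟩
          have : (k+2) - 1 = k + 1 := by omega
          rw [this]; exact ha1
        have := congrFun hup ⟨k+2, Nat.le_add_left 1 (k+1), hklt, le_refl _, ha3⟩
        simp only [mayaUp, LinearMap.coe_mk, AddHom.coe_mk, Pi.zero_apply,
          dif_pos hcond] at this
        exact (congrArg v (Subtype.ext (by simp [hseq]))).trans this
    constructor
    · intro hne'
      funext s
      rcases eq_or_ne s.1 i with h | h
      · have : s.1 ≤ k := by
          have h1 := s.2.2.2.1
          omega
        exact hdown' s this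
      · exact hall s h
    · intro hik
      refine ⟨v ⟨i, hi1, le_refl i, hik.ge, by rw [hik]; exact hne⟩, ?_⟩
      funext s
      rcases eq_or_ne s.1 i with h | h
      · rw [if_pos h]
        exact congrArg v (Subtype.ext h)
      · rw [if_neg h]
        exact hall s h
  · intro k hik
    constructor
    · funext s
      simp only [mayaUp, LinearMap.coe_mk, AddHom.coe_mk, Pi.zero_apply]
      split_ifs with h h2
      · exfalso
        have h1 := s.2.1
        have h3 := s.2.2.1
        omega
      · rfl
      · rfl
    · funext s
      simp only [mayaDown, LinearMap.coe_mk, AddHom.coe_mk, Pi.zero_apply]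
      split_ifs with h h2
      · exfalso
        have h1 := s.2.2.2.1
        omega
      · rfl
      · rfl
end

section
/- Let A = {a_1 < ... < a_i} and B = {b_1 < ... < b_j} be subsets of {1,...,n} (each ≠ an initial segment). Then dim Hom_Λ(N(A), N(B)) = |{r ∈ {1,...,i} : r ≤ j < a_r and a_{r-l} ≤ b_{j-l} for all l = 0,...,r-1}|, where Λ is the type A_{n-1} preprojective algebra and N(A), N(B) are the corresponding Maya modules. -/
open Finset

/-- The space of homomorphisms `N(A) → N(B)` of representations of the
type `A_{n-1}` preprojective algebra: families of degreewise linear maps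
commuting with all structure maps. -/
noncomputable def mayaHom (a b : ℕ → ℕ) (i j : ℕ) :
    Submodule ℂ (∀ k, MayaV a i k →ₗ[ℂ] MayaV b j k) where
  carrier := {f | ∀ k,
    (f (k + 1)).comp (mayaUp a i k) = (mayaUp b j k).comp (f k) ∧
    (f k).comp (mayaDown a i k) = (mayaDown b j k).comp (f (k + 1))}
  add_mem' := by
    intro f g hf hg k
    refine ⟨?_, ?_⟩ <;>
      simp only [Pi.add_apply, LinearMap.add_comp, LinearMap.comp_add,
        (hf k).1, (hf k).2, (hg k).1, (hg k).2]
  zero_mem' := by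
    intro k
    simp only [Pi.zero_apply, LinearMap.zero_comp, LinearMap.comp_zero, and_self]
  smul_mem' := by
    intro c f hf k
    refine ⟨?_, ?_⟩ <;>
      simp only [Pi.smul_apply, LinearMap.smul_comp, LinearMap.comp_smul,
        (hf k).1, (hf k).2]

namespace MayaProof

abbrev VV (c : ℕ → ℕ) (m r k : ℕ) : Prop := 1 ≤ r ∧ r ≤ m ∧ r ≤ k ∧ k < c r

noncomputable def dl (a : ℕ → ℕ) (i k : ℕ) (r : MayaIdx a i k) : MayaV a i k :=
  fun t => if r = t then 1 else 0

noncomputable def Cf (a b : ℕ → ℕ) (i j : ℕ)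
    (f : ∀ k, MayaV a i k →ₗ[ℂ] MayaV b j k) (k s r : ℕ) : ℂ :=
  if h : VV a i r k ∧ VV b j s k then
    f k (dl a i k ⟨r, h.1⟩) ⟨s, h.2⟩ else 0

variable {a b : ℕ → ℕ} {i j : ℕ} {f : ∀ k, MayaV a i k →ₗ[ℂ] MayaV b j k}

lemma Cf_pos {k s r : ℕ} (h1 : VV a i r k) (h2 : VV b j s k) :
    Cf a b i j f k s r = f k (dl a i k ⟨r, h1⟩) ⟨s, h2⟩ := dif_pos ⟨h1, h2⟩

lemma Cf_neg {k s r : ℕ} (h : ¬(VV a i r k ∧ VV b j s k)) : Cf a b i j f k s r = 0 := by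
  unfold Cf; rw [dif_neg h]

lemma down_dl (k r : ℕ) (h : VV a i r (k+1)) (hmem : VV a i r k) :
    mayaDown a i k (dl a i (k+1) ⟨r, h⟩) = dl a i k ⟨r, hmem⟩ := by
  funext t
  simp only [mayaDown, LinearMap.coe_mk, AddHom.coe_mk, dl]
  obtain ⟨tv, ht⟩ := t
  by_cases hrt : r = tv
  · subst hrt
    rw [dif_pos h.2.2.2]
    simp [Subtype.ext_iff]
  · by_cases hc : k + 1 < a tv
    · rw [dif_pos hc]
      simp [Subtype.ext_iff, hrt]
    · rw [dif_neg hc]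
      simp [Subtype.ext_iff, hrt]

lemma down_dl_zero (k : ℕ) (h : VV a i (k+1) (k+1)) :
    mayaDown a i k (dl a i (k+1) ⟨k+1, h⟩) = 0 := by
  funext t
  simp only [mayaDown, LinearMap.coe_mk, AddHom.coe_mk, dl]
  obtain ⟨tv, ht⟩ := t
  by_cases hc : k + 1 < a tv
  · rw [dif_pos hc]
    have : ¬ (k+1) = tv := by omega
    simp [Subtype.ext_iff, this]
  · rw [dif_neg hc]; rfl

lemma up_dl (k r : ℕ) (h : VV a i r k) (hmem : VV a i (r+1) (k+1)) :
    mayaUp a i k (dl a i k ⟨r, h⟩) = dl a i (k+1) ⟨r+1, hmem⟩ := by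
  funext t
  simp only [mayaUp, LinearMap.coe_mk, AddHom.coe_mk, dl]
  obtain ⟨tv, ht⟩ := t
  by_cases hrt : tv = r + 1
  · subst hrt
    have hc : 1 ≤ r + 1 - 1 ∧ r + 1 - 1 ≤ i ∧ r + 1 - 1 ≤ k ∧ k < a (r + 1 - 1) := by
      simpa using ⟨h.1, h.2.1, h.2.2.1, h.2.2.2⟩
    rw [dif_pos hc]
    simp [Subtype.ext_iff]
  · by_cases hc : 1 ≤ tv - 1 ∧ tv - 1 ≤ i ∧ tv - 1 ≤ k ∧ k < a (tv - 1)
    · rw [dif_pos hc]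
      have h1 : ¬ r = tv - 1 := by omega
      have h2 : ¬ (r+1) = tv := by omega
      simp [Subtype.ext_iff, h1, h2]
    · rw [dif_neg hc]
      have h2 : ¬ (r+1) = tv := by omega
      simp [Subtype.ext_iff, h2]

lemma up_dl_zero (k : ℕ) (h : VV a i i k) :
    mayaUp a i k (dl a i k ⟨i, h⟩) = 0 := by
  funext t
  simp only [mayaUp, LinearMap.coe_mk, AddHom.coe_mk, dl]
  obtain ⟨tv, ht⟩ := t
  by_cases hc : 1 ≤ tv - 1 ∧ tv - 1 ≤ i ∧ tv - 1 ≤ k ∧ k < a (tv - 1)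
  · rw [dif_pos hc]
    have h1 : ¬ i = tv - 1 := by omega
    simp [Subtype.ext_iff, h1]
  · rw [dif_neg hc]; rfl

end MayaProof
namespace MayaProof
variable {a b : ℕ → ℕ} {i j : ℕ} {f : ∀ k, MayaV a i k →ₗ[ℂ] MayaV b j k}

lemma hom_down (hf : f ∈ mayaHom a b i j) (k : ℕ) (x : MayaV a i (k+1)) :
    f k (mayaDown a i k x) = mayaDown b j k (f (k+1) x) := by
  have h := (hf k).2
  exact LinearMap.congr_fun h x

lemma hom_up (hf : f ∈ mayaHom a b i j) (k : ℕ) (x : MayaV a i k) :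
    f (k+1) (mayaUp a i k x) = mayaUp b j k (f k x) := by
  have h := (hf k).1
  exact LinearMap.congr_fun h x

lemma down_apply (k : ℕ) (y : MayaV b j (k+1)) (s : ℕ) (hs : VV b j s k) (hbs : k + 1 < b s)
    (hs' : VV b j s (k+1)) :
    mayaDown b j k y ⟨s, hs⟩ = y ⟨s, hs'⟩ := by
  simp only [mayaDown, LinearMap.coe_mk, AddHom.coe_mk]
  rw [dif_pos hbs]

lemma down_apply_zero (k : ℕ) (y : MayaV b j (k+1)) (s : ℕ) (hs : VV b j s k)
    (hbs : ¬ k + 1 < b s) :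
    mayaDown b j k y ⟨s, hs⟩ = 0 := by
  simp only [mayaDown, LinearMap.coe_mk, AddHom.coe_mk]
  rw [dif_neg hbs]

lemma up_apply (k : ℕ) (y : MayaV b j k) (s : ℕ) (hs : VV b j s (k+1))
    (hs' : VV b j (s-1) k) :
    mayaUp b j k y ⟨s, hs⟩ = y ⟨s - 1, hs'⟩ := by
  simp only [mayaUp, LinearMap.coe_mk, AddHom.coe_mk]
  rw [dif_pos hs']

lemma up_apply_zero (k : ℕ) (y : MayaV b j k) (s : ℕ) (hs : VV b j s (k+1))
    (hs' : ¬ VV b j (s-1) k) :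
    mayaUp b j k y ⟨s, hs⟩ = 0 := by
  simp only [mayaUp, LinearMap.coe_mk, AddHom.coe_mk]
  rw [dif_neg hs']

/-- L1 -/
lemma relL1 (hf : f ∈ mayaHom a b i j) {k s r : ℕ} (h1 : VV a i r (k+1)) (h2 : VV b j s k)
    (hrk : r ≤ k) (hbs : k + 1 < b s) :
    Cf a b i j f k s r = Cf a b i j f (k+1) s r := by
  have h1' : VV a i r k := ⟨h1.1, h1.2.1, hrk, by omega⟩
  have h2' : VV b j s (k+1) := ⟨h2.1, h2.2.1, by omega, hbs⟩
  have key := congrFun (hom_down hf k (dl a i (k+1) ⟨r, h1⟩)) ⟨s, h2⟩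
  rw [down_dl k r h1 h1'] at key
  rw [down_apply k _ s h2 hbs h2'] at key
  rw [Cf_pos h1' h2, Cf_pos h1 h2']
  exact key

/-- L2 -/
lemma relL2 (hf : f ∈ mayaHom a b i j) {k s r : ℕ} (h1 : VV a i r (k+1)) (h2 : VV b j s k)
    (hrk : r ≤ k) (hbs : ¬ k + 1 < b s) :
    Cf a b i j f k s r = 0 := by
  have h1' : VV a i r k := ⟨h1.1, h1.2.1, hrk, by omega⟩
  have key := congrFun (hom_down hf k (dl a i (k+1) ⟨r, h1⟩)) ⟨s, h2⟩
  rw [down_dl k r h1 h1'] at key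
  rw [down_apply_zero k _ s h2 hbs] at key
  rw [Cf_pos h1' h2]
  exact key

/-- L3 -/
lemma relL3 (hf : f ∈ mayaHom a b i j) {k s : ℕ} (h1 : VV a i (k+1) (k+1)) (h2 : VV b j s k)
    (hbs : k + 1 < b s) :
    Cf a b i j f (k+1) s (k+1) = 0 := by
  have h2' : VV b j s (k+1) := ⟨h2.1, h2.2.1, by omega, hbs⟩
  have key := congrFun (hom_down hf k (dl a i (k+1) ⟨k+1, h1⟩)) ⟨s, h2⟩
  rw [down_dl_zero k h1] at key
  rw [down_apply k _ s h2 hbs h2'] at key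
  rw [Cf_pos h1 h2']
  simp only [map_zero, Pi.zero_apply] at key
  exact key.symm

/-- L4 -/
lemma relL4 (hf : f ∈ mayaHom a b i j) {k s r : ℕ} (h1 : VV a i r k) (hr1 : VV a i (r+1) (k+1))
    (h2 : VV b j s (k+1)) (h2' : VV b j (s-1) k) :
    Cf a b i j f (k+1) s (r+1) = Cf a b i j f k (s-1) r := by
  have key := congrFun (hom_up hf k (dl a i k ⟨r, h1⟩)) ⟨s, h2⟩
  rw [up_dl k r h1 hr1] at key
  rw [up_apply k _ s h2 h2'] at key
  rw [Cf_pos hr1 h2, Cf_pos h1 h2']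
  exact key

/-- L5 -/
lemma relL5 (hf : f ∈ mayaHom a b i j) {k s r : ℕ} (h1 : VV a i r k) (hr1 : VV a i (r+1) (k+1))
    (h2 : VV b j s (k+1)) (h2' : ¬ VV b j (s-1) k) :
    Cf a b i j f (k+1) s (r+1) = 0 := by
  have key := congrFun (hom_up hf k (dl a i k ⟨r, h1⟩)) ⟨s, h2⟩
  rw [up_dl k r h1 hr1] at key
  rw [up_apply_zero k _ s h2 h2'] at key
  rw [Cf_pos hr1 h2]
  exact key

/-- L6 -/
lemma relL6 (hf : f ∈ mayaHom a b i j) {k s : ℕ} (h1 : VV a i i k)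
    (h2 : VV b j s (k+1)) (h2' : VV b j (s-1) k) :
    Cf a b i j f k (s-1) i = 0 := by
  have key := congrFun (hom_up hf k (dl a i k ⟨i, h1⟩)) ⟨s, h2⟩
  rw [up_dl_zero k h1] at key
  rw [up_apply k _ s h2 h2'] at key
  rw [Cf_pos h1 h2']
  simp only [map_zero, Pi.zero_apply] at key
  exact key.symm

end MayaProof
namespace MayaProof
variable {a b : ℕ → ℕ} {i j : ℕ} {f : ∀ k, MayaV a i k →ₗ[ℂ] MayaV b j k}

/-- strict monotone with step ≥ 1 -/
lemma addgap {c : ℕ → ℕ} {m : ℕ} (hmono : ∀ p q, 1 ≤ p → p < q → q ≤ m → c p < c q) :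
    ∀ p q, 1 ≤ p → p ≤ q → q ≤ m → c p + (q - p) ≤ c q := by
  intro p q hp hpq hqm
  obtain ⟨d, rfl⟩ : ∃ d, q = p + d := ⟨q - p, by omega⟩
  induction d with
  | zero => show c p + (p - p) ≤ c p; omega
  | succ d ih =>
    show c p + (p + d + 1 - p) ≤ c (p + d + 1)
    have h2 := hmono (p+d) (p+d+1) (by omega) (by omega) (by omega)
    have h1 := ih (by omega) (by omega)
    omega

lemma ge_id {c : ℕ → ℕ} {m : ℕ} (hmono : ∀ p q, 1 ≤ p → p < q → q ≤ m → c p < c q)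
    (hlb : ∀ p, 1 ≤ p → p ≤ m → 1 ≤ c p) :
    ∀ p, 1 ≤ p → p ≤ m → p ≤ c p := by
  intro p hp hpm
  induction p with
  | zero => omega
  | succ p ih =>
    rcases Nat.eq_zero_or_pos p with h | h
    · subst h; exact hlb 1 le_rfl hpm
    · have h1 := ih (by omega) (by omega)
      have h2 := hmono p (p+1) (by omega) (by omega) hpm
      omega

/-- transport in degree -/
lemma transport (hf : f ∈ mayaHom a b i j) {s r : ℕ} :
    ∀ m k k', k ≤ k' → k' - k = m → VV a i r k → VV b j s k → VV a i r k' → VV b j s k' →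
      Cf a b i j f k s r = Cf a b i j f k' s r := by
  intro m
  induction m with
  | zero =>
    intro k k' h1 h2 _ _ _ _
    obtain rfl : k = k' := by omega
    rfl
  | succ m ih =>
    intro k k' h1 h2 hak hbk hak' hbk'
    have hkk : k + 1 ≤ k' := by omega
    have hak1 : VV a i r (k+1) := ⟨hak.1, hak.2.1, by omega, by have := hak'.2.2.2; omega⟩
    have hbk1 : VV b j s (k+1) := ⟨hbk.1, hbk.2.1, by omega, by have := hbk'.2.2.2; omega⟩
    have e1 := relL1 hf hak1 hbk hak.2.2.1 hbk1.2.2.2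
    rw [e1]
    exact ih (k+1) k' hkk (by omega) hak1 hbk1 hak' hbk'

/-- kill when b s < a r (D2 chain) -/
lemma killTop (hf : f ∈ mayaHom a b i j) {s r : ℕ} :
    ∀ m k, b s - k = m → VV a i r k → VV b j s k → b s < a r →
      Cf a b i j f k s r = 0 := by
  intro m
  induction m with
  | zero => intro k _ _ hbk _; have := hbk.2.2.2; omega
  | succ m ih =>
    intro k hm hak hbk hba
    have h1 : VV a i r (k+1) := ⟨hak.1, hak.2.1, by omega, by have := hbk.2.2.2; omega⟩
    by_cases hc : k + 1 < b s
    · have hbk1 : VV b j s (k+1) := ⟨hbk.1, hbk.2.1, by omega, hc⟩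
      rw [relL1 hf h1 hbk hak.2.2.1 hc]
      exact ih (k+1) (by omega) h1 hbk1 hba
    · exact relL2 hf h1 hbk hak.2.2.1 hc

/-- kill when s < r (D3 chain) -/
lemma killLow (hf : f ∈ mayaHom a b i j) {s r : ℕ} (hsr : s < r) :
    ∀ k, VV a i r k → VV b j s k → Cf a b i j f k s r = 0 := by
  intro k
  induction k with
  | zero => intro hak _; have := hak.1; have := hak.2.2.1; omega
  | succ k ih =>
    intro hak hbk
    have hbk' : VV b j s k := ⟨hbk.1, hbk.2.1, by omega, by have := hbk.2.2.2; omega⟩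
    by_cases hrk : r = k + 1
    · subst hrk
      exact relL3 hf hak hbk' hbk.2.2.2
    · have hak' : VV a i r k := ⟨hak.1, hak.2.1, by omega, by have := hak.2.2.2; omega⟩
      rw [← relL1 hf hak hbk' hak'.2.2.1 hbk.2.2.2] at *
      exact ih hak' hbk'

/-- diagonal step (U1) -/
lemma diagStep (hf : f ∈ mayaHom a b i j)
    (hamono : ∀ p q, 1 ≤ p → p < q → q ≤ i → a p < a q)
    (hbmono : ∀ p q, 1 ≤ p → p < q → q ≤ j → b p < b q)
    {k s r : ℕ} (hak : VV a i r k) (hbk : VV b j s k) (hri : r + 1 ≤ i) (hsj : s + 1 ≤ j) :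
    Cf a b i j f (k+1) (s+1) (r+1) = Cf a b i j f k s r := by
  have haa : a r < a (r+1) := hamono r (r+1) hak.1 (by omega) hri
  have hbb : b s < b (s+1) := hbmono s (s+1) hbk.1 (by omega) hsj
  have hr1 : VV a i (r+1) (k+1) := ⟨by omega, hri, by have := hak.2.2.1; omega,
    by have := hak.2.2.2; omega⟩
  have h2 : VV b j (s+1) (k+1) := ⟨by omega, hsj, by have := hbk.2.2.1; omega,
    by have := hbk.2.2.2; omega⟩
  have h2' : VV b j (s+1-1) k := by simpa using hbk
  have := relL4 hf hak hr1 h2 h2'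
  simpa using this

/-- kill at row i (U3) -/
lemma killRowI (hf : f ∈ mayaHom a b i j)
    (hbmono : ∀ p q, 1 ≤ p → p < q → q ≤ j → b p < b q)
    {k s : ℕ} (hak : VV a i i k) (hbk : VV b j s k) (hsj : s + 1 ≤ j) :
    Cf a b i j f k s i = 0 := by
  have hbb : b s < b (s+1) := hbmono s (s+1) hbk.1 (by omega) hsj
  have h2 : VV b j (s+1) (k+1) := ⟨by omega, hsj, by have := hbk.2.2.1; omega,
    by have := hbk.2.2.2; omega⟩
  have h2' : VV b j (s+1-1) k := by simpa using hbk
  have := relL6 hf hak h2 h2'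
  simpa using this

end MayaProof
namespace MayaProof
variable {a b : ℕ → ℕ} {i j : ℕ} {f : ∀ k, MayaV a i k →ₗ[ℂ] MayaV b j k}

/-- descend the diagonal from the top entry (degree j, row j, column r). -/
lemma chainEq (hf : f ∈ mayaHom a b i j)
    (hamono : ∀ p q, 1 ≤ p → p < q → q ≤ i → a p < a q)
    (hbmono : ∀ p q, 1 ≤ p → p < q → q ≤ j → b p < b q)
    {r : ℕ} (hrj : r ≤ j) (hri : r ≤ i) :
    ∀ L, L < r →
      (∀ l, l ≤ L → VV a i (r - l) (j - l) ∧ VV b j (j - l) (j - l)) →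
      Cf a b i j f j j r = Cf a b i j f (j - L) (j - L) (r - L) := by
  intro L
  induction L with
  | zero =>
    intro _ _
    norm_num
  | succ L ih =>
    intro hLr hval
    have e1 := ih (by omega) (fun l hl => hval l (by omega))
    rw [e1]
    have hv := hval (L+1) le_rfl
    have hstep := diagStep (f := f) hf hamono hbmono (k := j - (L+1)) (s := j - (L+1))
        (r := r - (L+1)) hv.1 hv.2 (by omega) (by omega)
    have e2 : j - (L+1) + 1 = j - L := by omega
    have e3 : r - (L+1) + 1 = r - L := by omega
    rw [e2, e3] at hstep
    exact hstep

/-- the top case s = j of the master vanishing lemma -/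
lemma atTop (hf : f ∈ mayaHom a b i j)
    (hamono : ∀ p q, 1 ≤ p → p < q → q ≤ i → a p < a q)
    (hbmono : ∀ p q, 1 ≤ p → p < q → q ≤ j → b p < b q)
    (hblb : ∀ p, 1 ≤ p → p ≤ j → 1 ≤ b p)
    (hbne : j < b j)
    (H : ∀ r₀, (1 ≤ r₀ ∧ r₀ ≤ i ∧ r₀ ≤ j ∧ j < a r₀ ∧
        ∀ l, l < r₀ → a (r₀ - l) ≤ b (j - l)) → Cf a b i j f j j r₀ = 0)
    {k r : ℕ} (hak : VV a i r k) (hbk : VV b j j k) :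
    Cf a b i j f k j r = 0 := by
  by_cases hrj : j < r
  · exact killLow hf hrj k hak hbk
  push_neg at hrj
  -- transport to degree j
  have haj : VV a i r j := ⟨hak.1, hak.2.1, hrj, by have := hak.2.2.2; have := hbk.2.2.1; omega⟩
  have hbj : VV b j j j := ⟨by have := hbk.1; omega, le_rfl, le_rfl, hbne⟩
  have htr : Cf a b i j f k j r = Cf a b i j f j j r := by
    rcases le_or_gt k j with h | h
    · exact transport hf (j - k) k j h rfl hak hbk haj hbj
    · exact (transport hf (k - j) j k (by omega) rfl haj hbj hak hbk).symm
  rw [htr]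
  by_cases hgood : ∀ l, l < r → a (r - l) ≤ b (j - l)
  · exact H r ⟨hak.1, hak.2.1, hrj, haj.2.2.2, hgood⟩
  · -- there is a violation; take the minimal one
    push_neg at hgood
    have hex : ∃ l, l < r ∧ b (j - l) < a (r - l) := hgood
    classical
    have hspec := Nat.find_spec hex
    have hminp : ∀ l', l' < Nat.find hex → ¬(l' < r ∧ b (j - l') < a (r - l')) :=
      fun l' h => Nat.find_min hex h
    generalize hgen : Nat.find hex = l at hspec hminp
    obtain ⟨hlr, hlv⟩ := hspec
    have hmin : ∀ l', l' < l → a (r - l') ≤ b (j - l') := by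
      intro l' hl'
      have := hminp l' hl'
      push_neg at this
      exact this (by omega)
    have hr1 : 1 ≤ r := hak.1
    have hbgeid : ∀ p, 1 ≤ p → p ≤ j → p ≤ b p := ge_id hbmono hblb
    have hjl : j - l ≤ b (j - l) := hbgeid (j - l) (by omega) (by omega)
    have hajl : j - l < a (r - l) := by omega
    -- validity of all levels l' with a-side strict bound
    have hlevA : ∀ l', l' ≤ l → VV a i (r - l') (j - l') := by
      intro l' hl'
      have hgap : a (r - l) + ((r - l') - (r - l)) ≤ a (r - l') :=
        addgap hamono (r - l) (r - l') (by omega) (by omega) (by omega)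
      exact ⟨by omega, by omega, by omega, by omega⟩
    have hlevB : ∀ l', l' < l → VV b j (j - l') (j - l') := by
      intro l' hl'
      have h1 := hmin l' hl'
      have h2 := (hlevA l' (by omega)).2.2.2
      exact ⟨by omega, by omega, le_rfl, by omega⟩
    by_cases hbl : j - l < b (j - l)
    · -- the violating level is a valid entry: chain down and kill with D2
      have hlevB' : ∀ l', l' ≤ l → VV b j (j - l') (j - l') := by
        intro l' hl'
        rcases Nat.eq_or_lt_of_le hl' with h | h
        · subst h; exact ⟨by omega, by omega, le_rfl, hbl⟩
        · exact hlevB l' h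
      rw [chainEq hf hamono hbmono hrj hak.2.1 l hlr (fun l' hl' => ⟨hlevA l' hl', hlevB' l' hl'⟩)]
      exact killTop hf (b (j - l) - (j - l)) (j - l) rfl (hlevA l le_rfl) (hlevB' l le_rfl) hlv
    · -- empty row on the b side at level l : use L5 at level l-1
      have hbl' : b (j - l) = j - l := by omega
      have hl1 : 1 ≤ l := by
        by_contra hc
        have : l = 0 := by omega
        rw [this] at hbl'
        simp at hbl'
        omega
      rw [chainEq hf hamono hbmono hrj hak.2.1 (l-1) (by omega)
        (fun l' hl' => ⟨hlevA l' (by omega), hlevB l' (by omega)⟩)]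
      -- kill Cf (j-(l-1)) (j-(l-1)) (r-(l-1)) via relL5 with k := j - l, s := j - l + 1
      have hA : VV a i (r - l) (j - l) := hlevA l le_rfl
      have hA1 : VV a i (r - l + 1) (j - l + 1) := by
        have := (hlevA (l-1) (by omega))
        have e : r - (l-1) = r - l + 1 := by omega
        have e2 : j - (l-1) = j - l + 1 := by omega
        rw [e, e2] at this
        exact this
      have hB : VV b j (j - l + 1) (j - l + 1) := by
        have := hlevB (l-1) (by omega)
        have e2 : j - (l-1) = j - l + 1 := by omega
        rw [e2] at this
        exact this
      have hnB : ¬ VV b j (j - l + 1 - 1) (j - l) := by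
        intro hc
        have := hc.2.2.2
        simp only [Nat.add_sub_cancel] at this
        omega
      have h5 := relL5 hf hA hA1 hB hnB
      have e2 : j - (l-1) = j - l + 1 := by omega
      have e3 : r - (l-1) = r - l + 1 := by omega
      rw [e2, e3]
      exact h5

/-- master vanishing lemma -/
lemma master (hf : f ∈ mayaHom a b i j)
    (hamono : ∀ p q, 1 ≤ p → p < q → q ≤ i → a p < a q)
    (hbmono : ∀ p q, 1 ≤ p → p < q → q ≤ j → b p < b q)
    (hblb : ∀ p, 1 ≤ p → p ≤ j → 1 ≤ b p)
    (hbne : j < b j)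
    (H : ∀ r₀, (1 ≤ r₀ ∧ r₀ ≤ i ∧ r₀ ≤ j ∧ j < a r₀ ∧
        ∀ l, l < r₀ → a (r₀ - l) ≤ b (j - l)) → Cf a b i j f j j r₀ = 0) :
    ∀ m k s r, j - s ≤ m → Cf a b i j f k s r = 0 := by
  intro m
  induction m with
  | zero =>
    intro k s r hm
    by_cases hv : VV a i r k ∧ VV b j s k
    · have hsj : s = j := by
        have := hv.2.2.1
        omega
      subst hsj
      exact atTop hf hamono hbmono hblb hbne H hv.1 hv.2
    · exact Cf_neg hv
  | succ m ih =>
    intro k s r hm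
    by_cases hv : VV a i r k ∧ VV b j s k
    · obtain ⟨hak, hbk⟩ := hv
      by_cases hsj : s = j
      · subst hsj
        exact atTop hf hamono hbmono hblb hbne H hak hbk
      · have hsj' : s + 1 ≤ j := by have := hbk.2.1; omega
        by_cases hri : r = i
        · subst hri
          exact killRowI hf hbmono hak hbk hsj'
        · have hri' : r + 1 ≤ i := by have := hak.2.1; omega
          rw [← diagStep hf hamono hbmono hak hbk hri' hsj']
          exact ih (k+1) (s+1) (r+1) (by omega)
    · exact Cf_neg hv

end MayaProof
namespace MayaProof
variable {a b : ℕ → ℕ} {i j : ℕ}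

/-- the shift homomorphism associated to a good index r₀. -/
noncomputable def Fr (a b : ℕ → ℕ) (i j r₀ k : ℕ) : MayaV a i k →ₗ[ℂ] MayaV b j k where
  toFun x s := if h : VV a i (s.1 - (j - r₀)) k then x ⟨s.1 - (j - r₀), h⟩ else 0
  map_add' x y := by
    funext s
    by_cases h : VV a i (s.1 - (j - r₀)) k
    · simp only [dif_pos h, Pi.add_apply]
    · simp only [dif_neg h, Pi.add_apply, add_zero]
  map_smul' c x := by
    funext s
    by_cases h : VV a i (s.1 - (j - r₀)) k
    · simp only [dif_pos h, Pi.smul_apply, RingHom.id_apply]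
    · simp only [dif_neg h, Pi.smul_apply, smul_zero, RingHom.id_apply]

lemma Fr_mem
    (hamono : ∀ p q, 1 ≤ p → p < q → q ≤ i → a p < a q)
    {r₀ : ℕ} (hr1 : 1 ≤ r₀) (hri : r₀ ≤ i) (hrj : r₀ ≤ j)
    (hch : ∀ l, l < r₀ → a (r₀ - l) ≤ b (j - l)) :
    (fun k => Fr a b i j r₀ k) ∈ mayaHom a b i j := by
  intro k
  constructor
  · -- up equation
    apply LinearMap.ext
    intro x
    funext s
    obtain ⟨sv, hs⟩ := s
    simp only [LinearMap.comp_apply]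
    show (Fr a b i j r₀ (k+1)) (mayaUp a i k x) ⟨sv, hs⟩
        = (mayaUp b j k) ((Fr a b i j r₀ k) x) ⟨sv, hs⟩
    simp only [Fr, mayaUp, LinearMap.coe_mk, AddHom.coe_mk]
    have key : (VV a i (sv - (j - r₀)) (k+1) ∧
        (1 ≤ sv - (j - r₀) - 1 ∧ sv - (j - r₀) - 1 ≤ i ∧ sv - (j - r₀) - 1 ≤ k ∧
          k < a (sv - (j - r₀) - 1))) ↔
        ((1 ≤ sv - 1 ∧ sv - 1 ≤ j ∧ sv - 1 ≤ k ∧ k < b (sv - 1)) ∧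
          VV a i (sv - 1 - (j - r₀)) k) := by
      constructor
      · rintro ⟨h, h'⟩
        have hρ1 : 1 ≤ sv - (j - r₀) - 1 := h'.1
        have heq : sv - (j - r₀) - 1 = sv - 1 - (j - r₀) := by omega
        refine ⟨⟨by omega, by omega, by omega, ?_⟩, by rw [← heq]; exact h'⟩
        -- k < b (sv - 1) via the chain condition
        have hl : r₀ - (sv - 1 - (j - r₀)) < r₀ := by omega
        have hc := hch (r₀ - (sv - 1 - (j - r₀))) hl
        have e1 : r₀ - (r₀ - (sv - 1 - (j - r₀))) = sv - 1 - (j - r₀) := by omega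
        have e2 : j - (r₀ - (sv - 1 - (j - r₀))) = sv - 1 := by omega
        rw [e1, e2] at hc
        have := h'.2.2.2
        rw [heq] at this
        omega
      · rintro ⟨g, g'⟩
        have hρ1 : 1 ≤ sv - 1 - (j - r₀) := g'.1
        have heq : sv - (j - r₀) - 1 = sv - 1 - (j - r₀) := by omega
        have hup : sv - 1 - (j - r₀) + 1 ≤ r₀ := by omega
        have hmono := hamono (sv - 1 - (j - r₀)) (sv - 1 - (j - r₀) + 1) (by omega)
          (by omega) (by omega)
        have hsve : sv - (j - r₀) = sv - 1 - (j - r₀) + 1 := by omega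
        refine ⟨?_, ?_⟩
        · rw [hsve]
          have := g'.2.2.2
          exact ⟨by omega, by omega, by omega, by omega⟩
        · rw [heq]; exact g'
    by_cases hc : (1 ≤ sv - 1 ∧ sv - 1 ≤ j ∧ sv - 1 ≤ k ∧ k < b (sv - 1)) ∧
        VV a i (sv - 1 - (j - r₀)) k
    · have h := (key.mpr hc).1
      have h' := (key.mpr hc).2
      rw [dif_pos h, dif_pos h', dif_pos hc.1, dif_pos hc.2]
      exact congrArg x (Subtype.ext (show sv - (j - r₀) - 1 = sv - 1 - (j - r₀) by omega))
    · have hz1 : (if h : VV a i (sv - (j - r₀)) (k+1) then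
          (if h' : 1 ≤ sv - (j - r₀) - 1 ∧ sv - (j - r₀) - 1 ≤ i ∧
              sv - (j - r₀) - 1 ≤ k ∧ k < a (sv - (j - r₀) - 1) then
            x ⟨sv - (j - r₀) - 1, h'⟩ else 0) else 0) = 0 := by
        by_cases h : VV a i (sv - (j - r₀)) (k+1)
        · rw [dif_pos h]
          by_cases h' : 1 ≤ sv - (j - r₀) - 1 ∧ sv - (j - r₀) - 1 ≤ i ∧
              sv - (j - r₀) - 1 ≤ k ∧ k < a (sv - (j - r₀) - 1)
          · exact absurd (key.mp ⟨h, h'⟩) hc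
          · rw [dif_neg h']
        · rw [dif_neg h]
      have hz2 : (if g : 1 ≤ sv - 1 ∧ sv - 1 ≤ j ∧ sv - 1 ≤ k ∧ k < b (sv - 1) then
          (if g' : VV a i (sv - 1 - (j - r₀)) k then x ⟨sv - 1 - (j - r₀), g'⟩ else 0)
          else 0) = 0 := by
        by_cases g : 1 ≤ sv - 1 ∧ sv - 1 ≤ j ∧ sv - 1 ≤ k ∧ k < b (sv - 1)
        · rw [dif_pos g]
          by_cases g' : VV a i (sv - 1 - (j - r₀)) k
          · exact absurd ⟨g, g'⟩ hc
          · rw [dif_neg g']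
        · rw [dif_neg g]
      rw [hz1, hz2]
  · -- down equation
    apply LinearMap.ext
    intro x
    funext s
    obtain ⟨sv, hs⟩ := s
    simp only [LinearMap.comp_apply]
    show (Fr a b i j r₀ k) (mayaDown a i k x) ⟨sv, hs⟩
        = (mayaDown b j k) ((Fr a b i j r₀ (k+1)) x) ⟨sv, hs⟩
    simp only [Fr, mayaDown, LinearMap.coe_mk, AddHom.coe_mk]
    have key : (VV a i (sv - (j - r₀)) k ∧ k + 1 < a (sv - (j - r₀))) ↔
        (k + 1 < b sv ∧ VV a i (sv - (j - r₀)) (k+1)) := by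
      constructor
      · rintro ⟨h, h2⟩
        refine ⟨?_, ⟨h.1, h.2.1, by omega, h2⟩⟩
        have hl : r₀ - (sv - (j - r₀)) < r₀ := by omega
        have hc := hch (r₀ - (sv - (j - r₀))) hl
        have e1 : r₀ - (r₀ - (sv - (j - r₀))) = sv - (j - r₀) := by omega
        have e2 : j - (r₀ - (sv - (j - r₀))) = sv := by omega
        rw [e1, e2] at hc
        omega
      · rintro ⟨g2, g⟩
        have hsk : sv ≤ k := hs.2.2.1
        exact ⟨⟨g.1, g.2.1, by omega, by have := g.2.2.2; omega⟩, g.2.2.2⟩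
    by_cases hc : k + 1 < b sv ∧ VV a i (sv - (j - r₀)) (k+1)
    · have h := (key.mpr hc).1
      have h2 := (key.mpr hc).2
      rw [dif_pos h, dif_pos h2, dif_pos hc.1, dif_pos hc.2]
    · by_cases h : VV a i (sv - (j - r₀)) k
      · rw [dif_pos h]
        by_cases h2 : k + 1 < a (sv - (j - r₀))
        · exact absurd (key.mp ⟨h, h2⟩) hc
        · rw [dif_neg h2]
          by_cases g2 : k + 1 < b sv
          · rw [dif_pos g2, dif_neg (fun g => hc ⟨g2, g⟩)]
          · rw [dif_neg g2]
      · rw [dif_neg h]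
        by_cases g2 : k + 1 < b sv
        · rw [dif_pos g2, dif_neg (fun g => hc ⟨g2, g⟩)]
        · rw [dif_neg g2]

end MayaProof
namespace MayaProof
variable {a b : ℕ → ℕ} {i j : ℕ}

noncomputable instance (a : ℕ → ℕ) (i k : ℕ) : Fintype (MayaIdx a i k) :=
  Fintype.ofInjective (fun s => (⟨s.1, by have := s.2.2.1; omega⟩ : Fin (i+1)))
    (fun x y h => Subtype.ext (congrArg Fin.val h))

noncomputable def Phi (a b : ℕ → ℕ) (i j : ℕ) (S : Finset ℕ) (hbjj : VV b j j j)
    (hgood : ∀ g : ↥S, VV a i g.1 j) :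
    ↥(mayaHom a b i j) →ₗ[ℂ] (↥S → ℂ) where
  toFun f g := f.1 j (dl a i j ⟨g.1, hgood g⟩) ⟨j, hbjj⟩
  map_add' f g := by
    funext gg
    show ((↑(f + g) : ∀ k, MayaV a i k →ₗ[ℂ] MayaV b j k) j) _ _ = _
    simp [Submodule.coe_add]
  map_smul' c f := by
    funext gg
    show ((↑(c • f) : ∀ k, MayaV a i k →ₗ[ℂ] MayaV b j k) j) _ _ = _
    simp [Submodule.coe_smul]

lemma Phi_Cf {S : Finset ℕ} (hbjj : VV b j j j) (hgood : ∀ g : ↥S, VV a i g.1 j)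
    (f : ↥(mayaHom a b i j)) (g : ↥S) :
    Phi a b i j S hbjj hgood f g = Cf a b i j f.1 j j g.1 :=
  (Cf_pos (hgood g) hbjj).symm

lemma Fr_eval (hbjj : VV b j j j) {r₀ gv : ℕ} (hr : VV a i r₀ j) (hrj : r₀ ≤ j)
    (hgv : VV a i gv j) :
    Fr a b i j r₀ j (dl a i j ⟨gv, hgv⟩) ⟨j, hbjj⟩ = if gv = r₀ then 1 else 0 := by
  simp only [Fr, LinearMap.coe_mk, AddHom.coe_mk]
  have e : j - (j - r₀) = r₀ := by omega
  rw [dif_pos (show VV a i (j - (j - r₀)) j by rw [e]; exact hr)]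
  simp only [dl]
  by_cases hh : gv = r₀
  · rw [if_pos (Subtype.ext (show gv = j - (j - r₀) by omega)), if_pos hh]
  · rw [if_neg (fun hcon => hh (by
      have h2 : gv = j - (j - r₀) := congrArg Subtype.val hcon
      omega)), if_neg hh]

end MayaProof
set_option maxHeartbeats 1000000 in
set_option synthInstance.maxHeartbeats 400000 in
/-- for Maya modules `N(A)`, `N(B)` of the type `A_{n-1}`
preprojective algebra, `dim Hom(N(A), N(B))` equals the number of
`r ∈ {1,…,i}` with `r ≤ j < a r` and `a (r-l) ≤ b (j-l)` for all `l < r`. -/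
theorem homdim_maya (n i j : ℕ) (hn : 2 ≤ n)
    (hi1 : 1 ≤ i) (hin : i < n) (hj1 : 1 ≤ j) (hjn : j < n)
    (a b : ℕ → ℕ)
    (hamono : ∀ p q, 1 ≤ p → p < q → q ≤ i → a p < a q)
    (halb : ∀ p, 1 ≤ p → p ≤ i → 1 ≤ a p)
    (haub : ∀ p, 1 ≤ p → p ≤ i → a p ≤ n)
    (hane : i < a i)
    (hbmono : ∀ p q, 1 ≤ p → p < q → q ≤ j → b p < b q)
    (hblb : ∀ p, 1 ≤ p → p ≤ j → 1 ≤ b p)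
    (hbub : ∀ p, 1 ≤ p → p ≤ j → b p ≤ n)
    (hbne : j < b j) :
    Module.finrank ℂ (mayaHom a b i j)
      = ((Finset.Icc 1 i).filter
          (fun r => r ≤ j ∧ j < a r ∧ ∀ l, l < r → a (r - l) ≤ b (j - l))).card := by
  have hbjj : MayaProof.VV b j j j := ⟨hj1, le_rfl, le_rfl, hbne⟩
  set S := (Finset.Icc 1 i).filter
      (fun r => r ≤ j ∧ j < a r ∧ ∀ l, l < r → a (r - l) ≤ b (j - l)) with hS
  have hmemS : ∀ r₀ : ℕ, r₀ ∈ S ↔ (1 ≤ r₀ ∧ r₀ ≤ i ∧ r₀ ≤ j ∧ j < a r₀ ∧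
      ∀ l, l < r₀ → a (r₀ - l) ≤ b (j - l)) := by
    intro r₀
    rw [hS]
    simp only [Finset.mem_filter, Finset.mem_Icc]
    tauto
  have hgood : ∀ g : ↥S, MayaProof.VV a i g.1 j := by
    intro g
    have h := (hmemS g.1).1 g.2
    exact ⟨h.1, h.2.1, h.2.2.1, h.2.2.2.1⟩
  set Φ := MayaProof.Phi a b i j S hbjj hgood with hΦ
  have hinj : Function.Injective Φ := by
    rw [injective_iff_map_eq_zero]
    intro f hf0
    have H : ∀ r₀, (1 ≤ r₀ ∧ r₀ ≤ i ∧ r₀ ≤ j ∧ j < a r₀ ∧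
        ∀ l, l < r₀ → a (r₀ - l) ≤ b (j - l)) → MayaProof.Cf a b i j f.1 j j r₀ = 0 := by
      intro r₀ hr
      have hmem : r₀ ∈ S := (hmemS r₀).2 hr
      have h1 : Φ f ⟨r₀, hmem⟩ = 0 := congrFun hf0 ⟨r₀, hmem⟩
      rw [hΦ, MayaProof.Phi_Cf hbjj hgood f ⟨r₀, hmem⟩] at h1
      exact h1
    have hzero := MayaProof.master f.2 hamono hbmono hblb hbne H
    refine Subtype.ext (funext fun k => LinearMap.ext fun x => funext fun s => ?_)
    show (f.1 k) x s = (0 : ∀ k, MayaV a i k →ₗ[ℂ] MayaV b j k) k x s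
    simp only [Pi.zero_apply, LinearMap.zero_apply]
    have hx : x = ∑ r : MayaIdx a i k, x r • MayaProof.dl a i k r := pi_eq_sum_univ x
    rw [hx, map_sum, Finset.sum_apply]
    refine Finset.sum_eq_zero (fun r _ => ?_)
    simp only [map_smul, Pi.smul_apply]
    have h2 := hzero (j - s.1) k s.1 r.1 le_rfl
    rw [MayaProof.Cf_pos r.2 s.2] at h2
    rw [h2, smul_zero]
  have hsurj : Function.Surjective Φ := by
    intro y
    have hmm : (∑ g : ↥S, y g • (fun k => MayaProof.Fr a b i j g.1 k)) ∈ mayaHom a b i j := by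
      refine Submodule.sum_mem _ (fun g _ => Submodule.smul_mem _ _ ?_)
      have hg := (hmemS g.1).1 g.2
      exact MayaProof.Fr_mem hamono hg.1 hg.2.1 hg.2.2.1 (fun l hl => hg.2.2.2.2 l hl)
    refine ⟨⟨_, hmm⟩, ?_⟩
    funext g
    rw [hΦ]
    show (∑ g' : ↥S, y g' • (fun k => MayaProof.Fr a b i j g'.1 k)) j
        (MayaProof.dl a i j ⟨g.1, hgood g⟩) ⟨j, hbjj⟩ = y g
    rw [Finset.sum_apply]
    simp only [Pi.smul_apply]
    rw [LinearMap.sum_apply]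
    simp only [LinearMap.smul_apply]
    rw [Finset.sum_apply]
    simp only [Pi.smul_apply]
    have step : ∀ g' : ↥S, y g' • (MayaProof.Fr a b i j g'.1 j
        (MayaProof.dl a i j ⟨g.1, hgood g⟩) ⟨j, hbjj⟩) = if g = g' then y g' else 0 := by
      intro g'
      have hg' := (hmemS g'.1).1 g'.2
      rw [MayaProof.Fr_eval hbjj ⟨hg'.1, hg'.2.1, hg'.2.2.1, hg'.2.2.2.1⟩ hg'.2.2.1 (hgood g)]
      by_cases h : g = g'
      · simp [h]
      · have h2 : ¬ g.1 = g'.1 := fun hh => h (Subtype.ext hh)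
        simp [h, h2]
    rw [Finset.sum_congr rfl (fun g' _ => step g')]
    simp [Finset.sum_ite_eq]
  have e := LinearEquiv.ofBijective Φ ⟨hinj, hsurj⟩
  have hfr : Module.finrank ℂ (↥S → ℂ) = S.card := by
    rw [Module.finrank_fintype_fun_eq_card, Fintype.card_coe]
  rw [LinearEquiv.finrank_eq e, hfr]
end

section
/- For r ∈ R := {r ∈ {1,...,i} : r ≤ j < a_r and a_{r-l} ≤ b_{j-l} for all l = 0,...,r-1}, define φ_r: N(A) → N(B) by φ_r(w_{k,r-l}) = w'_{k,j-l} if l ≥ 0 and k ≥ j-l, and φ_r(w_{k,m}) = 0 otherwise. Then φ_r is a well-defined homomorphism of modules over the type A_{n-1} preprojective algebra, and the φ_r for r ∈ R are linearly independent in Hom(N(A), N(B)). -/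
open Finset

/-- The homomorphism `φ_r : N(A) → N(B)` taking the `r`-th row of `N(A)` to the
bottom row of `N(B)`: `w_{k,r-l} ↦ w'_{k,j-l}` when defined, and `0` otherwise
(written in coordinates on the bases). -/
noncomputable def mayaPhi (a b : ℕ → ℕ) (i j r k : ℕ) :
    MayaV a i k →ₗ[ℂ] MayaV b j k where
  toFun f s :=
    if h : 1 ≤ r - (j - s.1) ∧ r - (j - s.1) ≤ i ∧ r - (j - s.1) ≤ k ∧ k < a (r - (j - s.1))
    then f ⟨r - (j - s.1), h⟩ else 0
  map_add' f g := by
    funext s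
    by_cases h : 1 ≤ r - (j - s.1) ∧ r - (j - s.1) ≤ i ∧ r - (j - s.1) ≤ k ∧
        k < a (r - (j - s.1))
    · simp only [dif_pos h, Pi.add_apply]
    · simp only [dif_neg h, Pi.add_apply, add_zero]
  map_smul' c f := by
    funext s
    by_cases h : 1 ≤ r - (j - s.1) ∧ r - (j - s.1) ≤ i ∧ r - (j - s.1) ≤ k ∧
        k < a (r - (j - s.1))
    · simp only [dif_pos h, Pi.smul_apply, RingHom.id_apply]
    · simp only [dif_neg h, Pi.smul_apply, smul_zero, RingHom.id_apply]

/-- for each `r ∈ R`, the map `φ_r` is a homomorphism of modules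
over the type `A_{n-1}` preprojective algebra, and the family `(φ_r)_{r ∈ R}`
is linearly independent in `Hom(N(A), N(B))`. -/
theorem mayaPhi_hom_and_linearIndependent (n i j : ℕ) (hn : 2 ≤ n)
    (hi1 : 1 ≤ i) (hin : i < n) (hj1 : 1 ≤ j) (hjn : j < n)
    (a b : ℕ → ℕ)
    (hamono : ∀ p q, 1 ≤ p → p < q → q ≤ i → a p < a q)
    (halb : ∀ p, 1 ≤ p → p ≤ i → 1 ≤ a p)
    (haub : ∀ p, 1 ≤ p → p ≤ i → a p ≤ n)
    (hane : i < a i)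
    (hbmono : ∀ p q, 1 ≤ p → p < q → q ≤ j → b p < b q)
    (hblb : ∀ p, 1 ≤ p → p ≤ j → 1 ≤ b p)
    (hbub : ∀ p, 1 ≤ p → p ≤ j → b p ≤ n)
    (hbne : j < b j) :
    (∀ r ∈ (Finset.Icc 1 i).filter
        (fun r => r ≤ j ∧ j < a r ∧ ∀ l, l < r → a (r - l) ≤ b (j - l)),
      ∀ k, (mayaPhi a b i j r (k + 1)).comp (mayaUp a i k)
              = (mayaUp b j k).comp (mayaPhi a b i j r k) ∧
           (mayaPhi a b i j r k).comp (mayaDown a i k)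
              = (mayaDown b j k).comp (mayaPhi a b i j r (k + 1))) ∧
    (∀ c : ℕ → ℂ,
      (∀ k, (∑ r ∈ (Finset.Icc 1 i).filter
          (fun r => r ≤ j ∧ j < a r ∧ ∀ l, l < r → a (r - l) ≤ b (j - l)),
            c r • mayaPhi a b i j r k) = 0) →
      ∀ r ∈ (Finset.Icc 1 i).filter
          (fun r => r ≤ j ∧ j < a r ∧ ∀ l, l < r → a (r - l) ≤ b (j - l)),
        c r = 0) := by
  classical
  constructor
  · intro r hr k
    simp only [Finset.mem_filter, Finset.mem_Icc] at hr
    obtain ⟨⟨hr1, hri⟩, hrj, hja, hab⟩ := hr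
    constructor
    · apply LinearMap.ext; intro f; funext s
      obtain ⟨s1, hs1, hsj, hsk, hsb⟩ := s
      simp only [LinearMap.comp_apply, mayaPhi, mayaUp, LinearMap.coe_mk, AddHom.coe_mk]
      have hidx : r - (j - (s1 - 1)) = r - (j - s1) - 1 := by omega
      simp only [hidx]
      split_ifs <;>
        first
        | rfl
        | (exfalso
           have h1 : a (r - (j - s1) - 1) < a (r - (j - s1)) :=
             hamono _ _ (by omega) (by omega) (by omega)
           have h2 : a (r - (j - s1) - 1) ≤ b (s1 - 1) := by
             have h3 := hab (j - s1 + 1) (by omega)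
             have e1 : r - (j - s1 + 1) = r - (j - s1) - 1 := by omega
             have e2 : j - (j - s1 + 1) = s1 - 1 := by omega
             rw [e1, e2] at h3; exact h3
           omega)
    · apply LinearMap.ext; intro f; funext s
      obtain ⟨s1, hs1, hsj, hsk, hsb⟩ := s
      simp only [LinearMap.comp_apply, mayaPhi, mayaDown, LinearMap.coe_mk, AddHom.coe_mk]
      split_ifs <;>
        first
        | rfl
        | (exfalso
           have h2 : a (r - (j - s1)) ≤ b s1 := by
             have h3 := hab (j - s1) (by omega)
             have e2 : j - (j - s1) = s1 := by omega
             rw [e2] at h3; exact h3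
           omega)
  · intro c hc r hr
    have hmem := hr
    simp only [Finset.mem_filter, Finset.mem_Icc] at hmem
    obtain ⟨⟨hr1, hri⟩, hrj, hja, hab⟩ := hmem
    have h2 := congrFun (LinearMap.congr_fun (hc j)
      (fun s : MayaIdx a i j => if s.1 = r then (1 : ℂ) else 0))
      ⟨j, hj1, le_refl j, le_refl j, hbne⟩
    simp only [LinearMap.sum_apply, Finset.sum_apply, LinearMap.smul_apply, Pi.smul_apply,
      LinearMap.zero_apply, Pi.zero_apply, mayaPhi, LinearMap.coe_mk, AddHom.coe_mk,
      Nat.sub_self, Nat.sub_zero, smul_eq_mul] at h2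
    rw [Finset.sum_eq_single_of_mem r hr ?_] at h2
    · rw [dif_pos ⟨hr1, hri, hrj, hja⟩, if_pos rfl, mul_one] at h2
      exact h2
    · intro p hp hpr
      simp only [Finset.mem_filter, Finset.mem_Icc] at hp
      rw [dif_pos ⟨hp.1.1, hp.1.2, hp.2.1, hp.2.2.1⟩, if_neg hpr, mul_zero]
end

section
/- Let A = {a_1 < ... < a_i} ⊆ {1,...,n} with a_i ≥ i+2, set A' = {1,...,i-1, a_i} and A'' = {a_1,...,a_{i-1}}. Then inside the Maya module N(A), the span N of w_{i,i}, w_{i+1,i},...,w_{a_i - 1, i} is a submodule isomorphic to N(A'), and the quotient N(A)/N is isomorphic to the Maya module N(A''), giving a short exact sequence 0 → N(A') → N(A) → N(A'') → 0 of modules over the type A_{n-1} preprojective algebra. -/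
open Finset

/-- The subspace of the degree-`k` part of `N(A)` spanned by the row-`i` basis
vectors `w_{k,i}`. -/
noncomputable def mayaRowSub (a : ℕ → ℕ) (i k : ℕ) : Submodule ℂ (MayaV a i k) where
  carrier := {f | ∀ s : MayaIdx a i k, s.1 ≠ i → f s = 0}
  add_mem' := by
    intro f g hf hg s hs
    simp only [Pi.add_apply, hf s hs, hg s hs, add_zero]
  zero_mem' := by intro s _; rfl
  smul_mem' := by
    intro c f hf s hs
    simp only [Pi.smul_apply, hf s hs, smul_zero]

/-- Inclusion `N(A') → N(A)`. -/
noncomputable def mayaF (a : ℕ → ℕ) (i k : ℕ) :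
    MayaV (fun r => if r = i then a i else r) i k →ₗ[ℂ] MayaV a i k where
  toFun u s := if h : 1 ≤ s.1 ∧ s.1 ≤ i ∧ s.1 ≤ k ∧ k < (if s.1 = i then a i else s.1) then
      u ⟨s.1, h⟩ else 0
  map_add' u v := by
    funext s
    by_cases h : 1 ≤ s.1 ∧ s.1 ≤ i ∧ s.1 ≤ k ∧ k < (if s.1 = i then a i else s.1)
    · simp only [dif_pos h, Pi.add_apply]
    · simp only [dif_neg h, Pi.add_apply, add_zero]
  map_smul' c u := by
    funext s
    by_cases h : 1 ≤ s.1 ∧ s.1 ≤ i ∧ s.1 ≤ k ∧ k < (if s.1 = i then a i else s.1)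
    · simp only [dif_pos h, Pi.smul_apply, RingHom.id_apply]
    · simp only [dif_neg h, Pi.smul_apply, smul_zero, RingHom.id_apply]

/-- Projection `N(A) → N(A'')`. -/
noncomputable def mayaG (a : ℕ → ℕ) (i k : ℕ) :
    MayaV a i k →ₗ[ℂ] MayaV a (i - 1) k where
  toFun v s := v ⟨s.1, s.2.1, le_trans s.2.2.1 (Nat.sub_le i 1), s.2.2.2⟩
  map_add' _ _ := rfl
  map_smul' _ _ := rfl

/-- Any basis index of `N(A')` has row `i`. -/
theorem mayaIdx_row (a : ℕ → ℕ) (i k : ℕ)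
    (t : MayaIdx (fun r => if r = i then a i else r) i k) : t.1 = i := by
  by_contra h
  have := t.2
  simp only [if_neg h] at this
  omega

/-- with `A' = {1,…,i-1, a i}` and `A'' = {a 1,…,a (i-1)}`, the span
`N` of the row-`i` vectors `w_{i,i},…,w_{a i - 1, i}` of `N(A)` is a submodule
isomorphic to `N(A')`, with quotient isomorphic to `N(A'')`: there is a short
exact sequence `0 → N(A') → N(A) → N(A'') → 0` of modules over the type `A_{n-1}`
preprojective algebra whose image in `N(A)` is exactly `N`. -/
theorem maya_short_exact_sequence (n i : ℕ) (hn : 2 ≤ n) (hi1 : 1 ≤ i) (hin : i < n)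
    (a : ℕ → ℕ)
    (hmono : ∀ r s, 1 ≤ r → r < s → s ≤ i → a r < a s)
    (hlb : ∀ r, 1 ≤ r → r ≤ i → 1 ≤ a r)
    (hub : ∀ r, 1 ≤ r → r ≤ i → a r ≤ n)
    (hne : i + 1 < a i) :
    ∃ (f : ∀ k, MayaV (fun r => if r = i then a i else r) i k →ₗ[ℂ] MayaV a i k)
      (g : ∀ k, MayaV a i k →ₗ[ℂ] MayaV a (i - 1) k),
      (∀ k, Function.Injective (f k)) ∧
      (∀ k, Function.Surjective (g k)) ∧
      (∀ k, LinearMap.range (f k) = LinearMap.ker (g k)) ∧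
      (∀ k, LinearMap.range (f k) = mayaRowSub a i k) ∧
      (∀ k, (f (k + 1)).comp (mayaUp (fun r => if r = i then a i else r) i k)
          = (mayaUp a i k).comp (f k)) ∧
      (∀ k, (f k).comp (mayaDown (fun r => if r = i then a i else r) i k)
          = (mayaDown a i k).comp (f (k + 1))) ∧
      (∀ k, (g (k + 1)).comp (mayaUp a i k) = (mayaUp a (i - 1) k).comp (g k)) ∧
      (∀ k, (g k).comp (mayaDown a i k) = (mayaDown a (i - 1) k).comp (g (k + 1))) := by
  refine ⟨fun k => mayaF a i k, fun k => mayaG a i k, ?_, ?_, ?_, ?_, ?_, ?_, ?_, ?_⟩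
  · -- injectivity of f
    intro k u v huv
    funext t
    have ht : t.1 = i := mayaIdx_row a i k t
    have h2 := t.2
    rw [ht] at h2
    have hc : 1 ≤ i ∧ i ≤ i ∧ i ≤ k ∧ k < (if i = i then a i else i) := by
      simpa using h2
    have key := congrFun huv ⟨i, hc.1, hc.2.1, hc.2.2.1, by simpa using hc.2.2.2⟩
    simp only [mayaF, LinearMap.coe_mk, AddHom.coe_mk, if_true] at key
    rw [dif_pos (show 1 ≤ i ∧ i ≤ i ∧ i ≤ k ∧ k < a i by simpa using hc),
      dif_pos (show 1 ≤ i ∧ i ≤ i ∧ i ≤ k ∧ k < a i by simpa using hc)] at key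
    have ht' : t = ⟨i, by simpa using hc⟩ := Subtype.ext ht
    rw [ht']
    exact key
  · -- surjectivity of g
    intro k w
    refine ⟨fun s => if h : s.1 ≤ i - 1 then w ⟨s.1, s.2.1, h, s.2.2.2.1, s.2.2.2.2⟩ else 0, ?_⟩
    funext s
    simp only [mayaG, LinearMap.coe_mk, AddHom.coe_mk, dif_pos s.2.2.1]
  · -- range f = ker g
    intro k
    ext v
    simp only [LinearMap.mem_range, LinearMap.mem_ker]
    constructor
    · rintro ⟨u, rfl⟩
      funext s
      have hs : ¬ (1 ≤ s.1 ∧ s.1 ≤ i ∧ s.1 ≤ k ∧ k < (if s.1 = i then a i else s.1)) := by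
        have h1 : s.1 ≤ i - 1 := s.2.2.1
        have h2 : s.1 ≤ k := s.2.2.2.1
        have hne : s.1 ≠ i := by omega
        rw [if_neg hne]; omega
      simp only [mayaG, mayaF, LinearMap.coe_mk, AddHom.coe_mk, dif_neg hs, Pi.zero_apply]
    · intro hv
      refine ⟨fun t => v ⟨i, ?_⟩, ?_⟩
      · have h2 := t.2
        rw [mayaIdx_row a i k t] at h2
        simpa using h2
      · funext s
        by_cases hs : s.1 = i
        · have hc : 1 ≤ s.1 ∧ s.1 ≤ i ∧ s.1 ≤ k ∧ k < (if s.1 = i then a i else s.1) := by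
            refine ⟨s.2.1, s.2.2.1, s.2.2.2.1, ?_⟩
            rw [if_pos hs, ← hs]; exact s.2.2.2.2
          simp only [mayaF, LinearMap.coe_mk, AddHom.coe_mk, dif_pos hc]
          congr 1
          exact Subtype.ext hs.symm
        · have hnc : ¬ (1 ≤ s.1 ∧ s.1 ≤ i ∧ s.1 ≤ k ∧ k < (if s.1 = i then a i else s.1)) := by
            rw [if_neg hs]
            have := s.2.2.2.1
            omega
          simp only [mayaF, LinearMap.coe_mk, AddHom.coe_mk, dif_neg hnc]
          have hle : s.1 ≤ i - 1 := by have := s.2.2.1; omega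
          have := congrFun hv ⟨s.1, s.2.1, hle, s.2.2.2.1, s.2.2.2.2⟩
          simp only [mayaG, LinearMap.coe_mk, AddHom.coe_mk, Pi.zero_apply] at this
          exact this.symm
  · -- range f = mayaRowSub
    intro k
    ext v
    simp only [LinearMap.mem_range]
    constructor
    · rintro ⟨u, rfl⟩ s hs
      have hnc : ¬ (1 ≤ s.1 ∧ s.1 ≤ i ∧ s.1 ≤ k ∧ k < (if s.1 = i then a i else s.1)) := by
        rw [if_neg hs]
        have := s.2.2.2.1
        omega
      simp only [mayaF, LinearMap.coe_mk, AddHom.coe_mk, dif_neg hnc]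
    · intro hv
      refine ⟨fun t => v ⟨i, ?_⟩, ?_⟩
      · have h2 := t.2
        rw [mayaIdx_row a i k t] at h2
        simpa using h2
      · funext s
        by_cases hs : s.1 = i
        · have hc : 1 ≤ s.1 ∧ s.1 ≤ i ∧ s.1 ≤ k ∧ k < (if s.1 = i then a i else s.1) := by
            refine ⟨s.2.1, s.2.2.1, s.2.2.2.1, ?_⟩
            rw [if_pos hs, ← hs]; exact s.2.2.2.2
          simp only [mayaF, LinearMap.coe_mk, AddHom.coe_mk, dif_pos hc]
          congr 1
          exact Subtype.ext hs.symm
        · have hnc : ¬ (1 ≤ s.1 ∧ s.1 ≤ i ∧ s.1 ≤ k ∧ k < (if s.1 = i then a i else s.1)) := by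
            rw [if_neg hs]
            have := s.2.2.2.1
            omega
          simp only [mayaF, LinearMap.coe_mk, AddHom.coe_mk, dif_neg hnc]
          exact (hv s hs).symm
  · -- f ∘ up' = up ∘ f : both sides vanish
    intro k
    apply LinearMap.ext
    intro u
    funext s
    simp only [LinearMap.comp_apply, mayaF, mayaUp, LinearMap.coe_mk, AddHom.coe_mk]
    have hR : ∀ (h : 1 ≤ s.1 - 1 ∧ s.1 - 1 ≤ i ∧ s.1 - 1 ≤ k ∧ k < a (s.1 - 1)),
        ¬ (1 ≤ s.1 - 1 ∧ s.1 - 1 ≤ i ∧ s.1 - 1 ≤ k ∧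
            k < (if s.1 - 1 = i then a i else s.1 - 1)) := by
      intro h
      have hlt : s.1 - 1 < i := by have := s.2.2.1; have := h.1; omega
      rw [if_neg (by omega)]
      intro h'; omega
    have hRz : (if h : 1 ≤ s.1 - 1 ∧ s.1 - 1 ≤ i ∧ s.1 - 1 ≤ k ∧ k < a (s.1 - 1) then
        (if h' : 1 ≤ s.1 - 1 ∧ s.1 - 1 ≤ i ∧ s.1 - 1 ≤ k ∧
            k < (if s.1 - 1 = i then a i else s.1 - 1) then u ⟨s.1 - 1, h'⟩ else 0) else 0)
        = 0 := by
      by_cases h : 1 ≤ s.1 - 1 ∧ s.1 - 1 ≤ i ∧ s.1 - 1 ≤ k ∧ k < a (s.1 - 1)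
      · rw [dif_pos h, dif_neg (hR h)]
      · rw [dif_neg h]
    rw [hRz]
    have hL : ¬ (1 ≤ s.1 ∧ s.1 ≤ i ∧ s.1 ≤ k + 1 ∧ k + 1 < (if s.1 = i then a i else s.1)) ∨
        ¬ (1 ≤ s.1 - 1 ∧ s.1 - 1 ≤ i ∧ s.1 - 1 ≤ k ∧
            k < (if s.1 - 1 = i then a i else s.1 - 1)) := by
      by_cases h1 : s.1 = i
      · right
        by_cases hii : s.1 - 1 = i
        · intro h; omega
        · rw [if_neg hii]
          intro h; omega
      · left
        rw [if_neg h1]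
        intro h; omega
    rcases hL with hL | hL
    · rw [dif_neg hL]
    · by_cases hc : 1 ≤ s.1 ∧ s.1 ≤ i ∧ s.1 ≤ k + 1 ∧ k + 1 < (if s.1 = i then a i else s.1)
      · rw [dif_pos hc, dif_neg hL]
      · rw [dif_neg hc]
  · -- f ∘ down' = down ∘ f
    intro k
    apply LinearMap.ext
    intro u
    funext s
    simp only [LinearMap.comp_apply, mayaF, mayaDown, LinearMap.coe_mk, AddHom.coe_mk]
    by_cases h1 : k + 1 < (if s.1 = i then a i else s.1)
    · have hsi : s.1 = i := by
        by_contra h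
        rw [if_neg h] at h1
        have := s.2.2.2.1
        omega
      have hc : 1 ≤ s.1 ∧ s.1 ≤ i ∧ s.1 ≤ k ∧ k < (if s.1 = i then a i else s.1) :=
        ⟨s.2.1, s.2.2.1, s.2.2.2.1, by omega⟩
      have hak : k + 1 < a s.1 := by rwa [if_pos hsi, ← hsi] at h1
      have hc2 : 1 ≤ s.1 ∧ s.1 ≤ i ∧ s.1 ≤ k + 1 ∧ k + 1 < (if s.1 = i then a i else s.1) :=
        ⟨s.2.1, s.2.2.1, by omega, h1⟩
      rw [dif_pos hc, dif_pos h1, dif_pos hak, dif_pos hc2]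
    · have hz : (if h : 1 ≤ s.1 ∧ s.1 ≤ i ∧ s.1 ≤ k ∧ k < (if s.1 = i then a i else s.1) then
          (if h' : k + 1 < (if s.1 = i then a i else s.1) then
            u ⟨s.1, h.1, h.2.1, Nat.le_succ_of_le h.2.2.1, h'⟩ else 0) else 0) = 0 := by
        by_cases h : 1 ≤ s.1 ∧ s.1 ≤ i ∧ s.1 ≤ k ∧ k < (if s.1 = i then a i else s.1)
        · rw [dif_pos h, dif_neg h1]
        · rw [dif_neg h]
      rw [hz]
      by_cases h2 : k + 1 < a s.1
      · rw [dif_pos h2]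
        have hnc : ¬ (1 ≤ s.1 ∧ s.1 ≤ i ∧ s.1 ≤ k + 1 ∧
            k + 1 < (if s.1 = i then a i else s.1)) := fun h => h1 h.2.2.2
        rw [dif_neg hnc]
      · rw [dif_neg h2]
  · -- g ∘ up = up'' ∘ g
    intro k
    apply LinearMap.ext
    intro v
    funext s
    simp only [LinearMap.comp_apply, mayaG, mayaUp, LinearMap.coe_mk, AddHom.coe_mk]
    by_cases h : 1 ≤ s.1 - 1 ∧ s.1 - 1 ≤ i - 1 ∧ s.1 - 1 ≤ k ∧ k < a (s.1 - 1)
    · have h' : 1 ≤ s.1 - 1 ∧ s.1 - 1 ≤ i ∧ s.1 - 1 ≤ k ∧ k < a (s.1 - 1) :=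
        ⟨h.1, le_trans h.2.1 (Nat.sub_le i 1), h.2.2.1, h.2.2.2⟩
      rw [dif_pos h', dif_pos h]
    · have h' : ¬ (1 ≤ s.1 - 1 ∧ s.1 - 1 ≤ i ∧ s.1 - 1 ≤ k ∧ k < a (s.1 - 1)) := by
        intro hh
        exact h ⟨hh.1, by have := s.2.2.1; omega, hh.2.2.1, hh.2.2.2⟩
      rw [dif_neg h', dif_neg h]
  · -- g ∘ down = down'' ∘ g
    intro k
    apply LinearMap.ext
    intro v
    funext s
    simp only [LinearMap.comp_apply, mayaG, mayaDown, LinearMap.coe_mk, AddHom.coe_mk]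
end
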